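/- arXiv:math/0204122 — 6 statements merged into one kernel-verified Lean document; each statement's English description precedes it below -/
import Mathlib

section
/- Every chainable metric continuum is atriodic. -/
open Metric Set Function

def IsSubcontinuum {X : Type*} [TopologicalSpace X] (A : Set X) : Prop :=
  IsCompact A ∧ IsConnected A

def Chainable (X : Type*) [MetricSpace X] : Prop :=
  ∀ ε : ℝ, 0 < ε → ∃ n : ℕ, ∃ C : Fin (n + 1) → Set X,
    (∀ i, IsOpen (C i)) ∧ (⋃ i, C i) = Set.univ ∧
    (∀ i, Metric.diam (C i) < ε) ∧
    (∀ i j, (C i ∩ C j).Nonempty ↔ |(i : ℤ) - (j : ℤ)| ≤ 1)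

def SetUnicoherent {X : Type*} [TopologicalSpace X] (H : Set X) : Prop :=
  ∀ A B : Set X, IsSubcontinuum A → IsSubcontinuum B → A ∪ B = H → IsConnected (A ∩ B)

def Unicoherent (X : Type*) [TopologicalSpace X] : Prop :=
  ∀ A B : Set X, IsSubcontinuum A → IsSubcontinuum B → A ∪ B = Set.univ → IsConnected (A ∩ B)

def SetDecomposable {X : Type*} [TopologicalSpace X] (H : Set X) : Prop :=
  ∃ A B : Set X, IsSubcontinuum A ∧ IsSubcontinuum B ∧ A ⊂ H ∧ B ⊂ H ∧ A ∪ B = H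

def IsTriod {X : Type*} [TopologicalSpace X] (T : Set X) : Prop :=
  IsSubcontinuum T ∧ ∃ Z : Set X, IsSubcontinuum Z ∧ Z ⊆ T ∧
    ∃ x ∈ T \ Z, ∃ y ∈ T \ Z, ∃ z ∈ T \ Z,
      connectedComponentIn (T \ Z) x ≠ connectedComponentIn (T \ Z) y ∧
      connectedComponentIn (T \ Z) x ≠ connectedComponentIn (T \ Z) z ∧
      connectedComponentIn (T \ Z) y ≠ connectedComponentIn (T \ Z) z

def AlmostChainable (M : Type*) [MetricSpace M] : Prop :=
  ∀ ε : ℝ, 0 < ε → ∃ (G : Set (Set M)) (n : ℕ) (L : Fin (n + 1) → Set M),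
    (∀ U ∈ G, IsOpen U ∧ Metric.diam U < ε) ∧ ⋃₀ G = Set.univ ∧
    (∀ i, L i ∈ G) ∧
    (∀ i j, (L i ∩ L j).Nonempty ↔ |(i : ℤ) - (j : ℤ)| ≤ 1) ∧
    (∀ i : Fin (n + 1), (i : ℕ) < n → ∀ U ∈ G, U ∉ Set.range L → L i ∩ U = ∅) ∧
    (∀ x : M, ∃ i, ∃ y ∈ L i, dist x y ≤ ε)

def InverseLimit (Y : ℕ → Type*) [∀ n, TopologicalSpace (Y n)]
    (f : ∀ n, Y (n + 1) → Y n) : Set (∀ n, Y n) :=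
  {x | ∀ n, f n (x (n + 1)) = x n}

def IsPolyhedron (Y : Type*) [TopologicalSpace Y] : Prop :=
  ∃ (n : ℕ) (S : Finset (Finset (EuclideanSpace ℝ (Fin n)))),
    Nonempty (Y ≃ₜ ↥(⋃ s ∈ S, convexHull ℝ (s : Set (EuclideanSpace ℝ (Fin n)))))

def IsGraphSet {n : ℕ} (K : Set (EuclideanSpace ℝ (Fin n))) : Prop :=
  (∃ S : Finset (Finset (EuclideanSpace ℝ (Fin n))), (∀ s ∈ S, s.card ≤ 2) ∧
      K = ⋃ s ∈ S, convexHull ℝ (s : Set (EuclideanSpace ℝ (Fin n)))) ∧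
  IsConnected K ∧ K.Nontrivial

def IsTreeSet {n : ℕ} (K : Set (EuclideanSpace ℝ (Fin n))) : Prop :=
  IsGraphSet K ∧ ∀ A : Set (EuclideanSpace ℝ (Fin n)), A ⊆ K → ¬ Nonempty (A ≃ₜ Circle)

def IsBranchPoint (Y : Type*) [TopologicalSpace Y] (x : Y) : Prop :=
  ¬ ∀ V ∈ nhds x, ∃ U ∈ nhds x,
    U ⊆ V ∧ IsOpen U ∧ (frontier U).Finite ∧ (frontier U).ncard ≤ 2

def KJunctioned (X : Type*) [TopologicalSpace X] (k : ℕ) : Prop :=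
  ∃ (m : ℕ → ℕ) (G : ∀ n : ℕ, Set (EuclideanSpace ℝ (Fin (m n))))
    (f : ∀ n : ℕ, ↥(G (n + 1)) → ↥(G n)),
    (∀ n, IsGraphSet (G n)) ∧
    (∀ n, {x : ↥(G n) | IsBranchPoint (↥(G n)) x}.Finite ∧
      {x : ↥(G n) | IsBranchPoint (↥(G n)) x}.ncard ≤ k) ∧
    (∀ n, Continuous (f n) ∧ Function.Surjective (f n)) ∧
    Nonempty (X ≃ₜ ↥(InverseLimit (fun n => ↥(G n)) f))

def TreeLike (X : Type*) [MetricSpace X] : Prop :=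
  ∀ ε : ℝ, 0 < ε → ∃ (m : ℕ) (T : Set (EuclideanSpace ℝ (Fin m))), IsTreeSet T ∧
    ∃ f : X → ↥T, Continuous f ∧ Function.Surjective f ∧ ∀ t, Metric.diam (f ⁻¹' {t}) < ε

noncomputable def Span (X : Type*) [MetricSpace X] : ℝ :=
  sSup {σ : ℝ | 0 ≤ σ ∧ ∃ Z : Set (X × X), IsSubcontinuum Z ∧
    Prod.fst '' Z = Prod.snd '' Z ∧ ∀ p ∈ Z, σ ≤ dist p.1 p.2}


/-- In a compact T2 space, a closed set disjoint from the connected component of `x`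
can be separated from `x` by a clopen set. -/
lemma aux_clopen {Y : Type*} [TopologicalSpace Y] [T2Space Y] [CompactSpace Y] {x : Y}
    {F : Set Y} (hF : IsClosed F) (hcc : connectedComponent x ∩ F = ∅) :
    ∃ V : Set Y, IsClopen V ∧ x ∈ V ∧ V ∩ F = ∅ := by
  have hFc : IsCompact F := hF.isCompact
  have hcov : F ⊆ ⋃ s : { s : Set Y // IsClopen s ∧ x ∈ s }, ((s : Set Y)ᶜ) := by
    intro p hp
    have hpc : p ∉ connectedComponent x := by
      intro h
      exact absurd hcc (by simp [eq_empty_iff_forall_notMem]; exact ⟨p, h, hp⟩)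
    rw [connectedComponent_eq_iInter_isClopen x, mem_iInter] at hpc
    push_neg at hpc
    obtain ⟨s, hs⟩ := hpc
    exact mem_iUnion.mpr ⟨s, hs⟩
  obtain ⟨t, ht⟩ := hFc.elim_finite_subcover _ (fun s => s.2.1.compl.isOpen) hcov
  refine ⟨⋂ s ∈ t, (s : Set Y), isClopen_biInter_finset (fun s _ => s.2.1),
    mem_iInter₂.mpr (fun s _ => s.2.2), ?_⟩
  rw [eq_empty_iff_forall_notMem]
  rintro p ⟨hpV, hpF⟩
  obtain ⟨s, hst, hps⟩ := mem_iUnion₂.mp (ht hpF)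
  exact hps (mem_iInter₂.mp hpV s hst)

/-- Points of the closure of a component that lie in the carrier belong to the component. -/
lemma mem_cc_of_closure {X : Type*} [TopologicalSpace X] {U : Set X} {y p : X}
    (hy : y ∈ U) (hp : p ∈ closure (connectedComponentIn U y)) (hpU : p ∈ U) :
    p ∈ connectedComponentIn U y := by
  set K := connectedComponentIn U y with hK
  have h1 : IsPreconnected (insert p K) :=
    isPreconnected_connectedComponentIn.subset_closure (subset_insert _ _)
      (insert_subset hp subset_closure)
  have h2 : insert p K ⊆ U := insert_subset hpU (connectedComponentIn_subset _ _)
  have h3 : y ∈ insert p K := mem_insert_of_mem _ (mem_connectedComponentIn hy)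
  exact (h1.subset_connectedComponentIn h3 h2) (mem_insert p K)

/-- Boundary bumping: the closure of a component of `T \ Z` meets `Z`. -/
lemma bump {X : Type*} [MetricSpace X] {T Z : Set X} (hTc : IsCompact T)
    (hTconn : IsPreconnected T) (hZcl : IsClosed Z) (hZT : Z ⊆ T) (hZne : Z.Nonempty)
    {x : X} (hx : x ∈ T \ Z) :
    (closure (connectedComponentIn (T \ Z) x) ∩ Z).Nonempty := by
  set K := connectedComponentIn (T \ Z) x with hK
  by_contra hcon
  rw [not_nonempty_iff_eq_empty] at hcon
  have hKsub : K ⊆ T \ Z := connectedComponentIn_subset _ _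
  have hxK : x ∈ K := mem_connectedComponentIn hx
  have hTcl : IsClosed T := hTc.isClosed
  have hclT : closure K ⊆ T := closure_minimal (hKsub.trans diff_subset) hTcl
  have hclU : closure K ⊆ T \ Z := fun p hp =>
    ⟨hclT hp, fun hpZ => (eq_empty_iff_forall_notMem.mp hcon p ⟨hp, hpZ⟩)⟩
  have hclK : closure K ⊆ K :=
    isPreconnected_connectedComponentIn.closure.subset_connectedComponentIn
      (subset_closure hxK) hclU
  have hKclosed : IsClosed K := isClosed_of_closure_subset hclK
  have hKcomp : IsCompact K := hTc.of_isClosed_subset hKclosed (hKsub.trans diff_subset)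
  have hZcomp : IsCompact Z := hTc.of_isClosed_subset hZcl hZT
  have hdisj : Disjoint K Z := disjoint_left.mpr fun p hpK hpZ => (hKsub hpK).2 hpZ
  obtain ⟨O, O', hO, hO', hKO, hZO', hOO'⟩ :=
    SeparatedNhds.of_isCompact_isCompact hKcomp hZcomp hdisj
  set S : Set X := closure O ∩ T with hS
  have hScomp : IsCompact S := hTc.of_isClosed_subset (isClosed_closure.inter hTcl)
    inter_subset_right
  have hclOO' : closure O ⊆ O'ᶜ :=
    closure_minimal (fun p hp hp' => (disjoint_left.mp hOO') hp hp') hO'.isClosed_compl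
  have hSU : S ⊆ T \ Z := fun p hp => ⟨hp.2, fun hpZ => hclOO' hp.1 (hZO' hpZ)⟩
  have hxS : x ∈ S := ⟨subset_closure (hKO hxK), hx.1⟩
  haveI : CompactSpace ↥S := isCompact_iff_compactSpace.mp hScomp
  set x' : ↥S := ⟨x, hxS⟩ with hx'
  have hccim : (Subtype.val '' connectedComponent x') ⊆ K := by
    apply IsPreconnected.subset_connectedComponentIn
    · exact isPreconnected_connectedComponent.image _ continuous_subtype_val.continuousOn
    · exact ⟨x', mem_connectedComponent, rfl⟩
    · rintro p ⟨q, _, rfl⟩; exact hSU q.2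
  have hccO : connectedComponent x' ⊆ Subtype.val ⁻¹' O :=
    fun q hq => hKO (hccim ⟨q, hq, rfl⟩)
  have hFcl : IsClosed (Subtype.val ⁻¹' Oᶜ : Set ↥S) :=
    hO.isClosed_compl.preimage continuous_subtype_val
  have hccF : connectedComponent x' ∩ (Subtype.val ⁻¹' Oᶜ) = ∅ := by
    rw [eq_empty_iff_forall_notMem]
    rintro q ⟨hq1, hq2⟩
    exact hq2 (hccO hq1)
  obtain ⟨V', hV'clopen, hxV', hV'F⟩ := aux_clopen hFcl hccF
  have hV'O : V' ⊆ Subtype.val ⁻¹' O := by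
    intro q hq
    by_contra hq'
    exact (eq_empty_iff_forall_notMem.mp hV'F q) ⟨hq, hq'⟩
  set V : Set X := Subtype.val '' V' with hV
  have hVcomp : IsCompact V := (hV'clopen.1.isCompact).image continuous_subtype_val
  have hVcl : IsClosed V := hVcomp.isClosed
  obtain ⟨Wo, hWo, hWoV⟩ := isOpen_induced_iff.mp hV'clopen.2
  have hVeq : V = (Wo ∩ O) ∩ T := by
    apply Subset.antisymm
    · rintro p ⟨q, hqV, rfl⟩
      exact ⟨⟨by rw [← hWoV] at hqV; exact hqV, hV'O hqV⟩, q.2.2⟩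
    · rintro p ⟨⟨hpW, hpO⟩, hpT⟩
      have hpS : p ∈ S := ⟨subset_closure hpO, hpT⟩
      refine ⟨⟨p, hpS⟩, ?_, rfl⟩
      rw [← hWoV]; exact hpW
  have hVZ : ∀ p ∈ V, p ∉ Z := by
    rintro p ⟨q, hqV, rfl⟩ hpZ
    exact (disjoint_left.mp hOO') (hV'O hqV) (hZO' hpZ)
  obtain ⟨z0, hz0⟩ := hZne
  have hxV : x ∈ V := ⟨x', hxV', rfl⟩
  have := hTconn (Wo ∩ O) Vᶜ (hWo.inter hO) hVcl.isOpen_compl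
    (by
      intro p hpT
      by_cases hpV : p ∈ V
      · rw [hVeq] at hpV; exact Or.inl hpV.1
      · exact Or.inr hpV)
    ⟨x, hx.1, by rw [hVeq] at hxV; exact hxV.1⟩
    ⟨z0, hZT hz0, fun hzV => hVZ z0 hzV hz0⟩
  obtain ⟨p, hpT, hpWO, hpV⟩ := this
  exact hpV (by rw [hVeq]; exact ⟨hpWO, hpT⟩)


lemma trace_interval {X : Type*} [MetricSpace X] {n : ℕ} {C : Fin (n + 1) → Set X}
    (hopen : ∀ i, IsOpen (C i)) (hcover : (⋃ i, C i) = univ)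
    (hlink : ∀ i j, (C i ∩ C j).Nonempty ↔ |(i : ℤ) - (j : ℤ)| ≤ 1)
    {S : Set X} (hS : IsPreconnected S) {i m j : Fin (n + 1)}
    (him : i < m) (hmj : m < j)
    (hi : (C i ∩ S).Nonempty) (hj : (C j ∩ S).Nonempty) : (C m ∩ S).Nonempty := by
  by_contra hm
  rw [not_nonempty_iff_eq_empty] at hm
  set u : Set X := ⋃ k : Fin (n + 1), ⋃ _ : k < m, C k with hu_def
  set v : Set X := ⋃ k : Fin (n + 1), ⋃ _ : m < k, C k with hv_def
  have hu : IsOpen u := isOpen_iUnion fun k => isOpen_iUnion fun _ => hopen k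
  have hv : IsOpen v := isOpen_iUnion fun k => isOpen_iUnion fun _ => hopen k
  have hcov : S ⊆ u ∪ v := by
    intro p hp
    have hpu : p ∈ ⋃ k, C k := by rw [hcover]; trivial
    obtain ⟨k, hk⟩ := mem_iUnion.mp hpu
    rcases lt_trichotomy k m with h | h | h
    · exact Or.inl (mem_iUnion.mpr ⟨k, mem_iUnion.mpr ⟨h, hk⟩⟩)
    · exfalso
      subst h
      rw [eq_empty_iff_forall_notMem] at hm
      exact hm p ⟨hk, hp⟩
    · exact Or.inr (mem_iUnion.mpr ⟨k, mem_iUnion.mpr ⟨h, hk⟩⟩)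
  have key : ∀ p, p ∈ u → p ∈ v → False := by
    intro p hpu hpv
    obtain ⟨k, hk⟩ := mem_iUnion.mp hpu
    obtain ⟨hkm, hpk⟩ := mem_iUnion.mp hk
    obtain ⟨l, hl⟩ := mem_iUnion.mp hpv
    obtain ⟨hml, hpl⟩ := mem_iUnion.mp hl
    have h1 : (C k ∩ C l).Nonempty := ⟨p, hpk, hpl⟩
    rw [hlink k l] at h1
    have h2 : (k : ℕ) < (m : ℕ) := hkm
    have h3 : (m : ℕ) < (l : ℕ) := hml
    rw [abs_le] at h1
    omega
  obtain ⟨p, hpS, hpu, hpv⟩ := hS u v hu hv hcov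
    (hi.imp fun p hp => ⟨hp.2, mem_iUnion.mpr ⟨i, mem_iUnion.mpr ⟨him, hp.1⟩⟩⟩)
    (hj.imp fun p hp => ⟨hp.2, mem_iUnion.mpr ⟨j, mem_iUnion.mpr ⟨hmj, hp.1⟩⟩⟩)
  exact key p hpu hpv

lemma side_left {N : ℕ} {P Q : Fin N → Prop}
    (intP : ∀ a b c : Fin N, a < b → b < c → P a → P c → P b)
    (intQ : ∀ a b c : Fin N, a < b → b < c → Q a → Q c → Q b)
    {iz ia ib : Fin N} (hPz : P iz) (hQz : Q iz) (hPa : P ia) (hQa : ¬ Q ia)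
    (hQb : Q ib) (hPb : ¬ P ib) (ha : ia < iz) (hb : ib < iz) : False := by
  rcases lt_trichotomy ia ib with h | h | h
  · exact hPb (intP ia ib iz h hb hPa hPz)
  · exact hQa (h ▸ hQb)
  · exact hQa (intQ ib ia iz h ha hQb hQz)

lemma side_right {N : ℕ} {P Q : Fin N → Prop}
    (intP : ∀ a b c : Fin N, a < b → b < c → P a → P c → P b)
    (intQ : ∀ a b c : Fin N, a < b → b < c → Q a → Q c → Q b)
    {iz ia ib : Fin N} (hPz : P iz) (hQz : Q iz) (hPa : P ia) (hQa : ¬ Q ia)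
    (hQb : Q ib) (hPb : ¬ P ib) (ha : iz < ia) (hb : iz < ib) : False := by
  rcases lt_trichotomy ia ib with h | h | h
  · exact hQa (intQ iz ia ib ha h hQz hQb)
  · exact hQa (h ▸ hQb)
  · exact hPb (intP iz ib ia hb h hPz hPa)

theorem stmt1 (X : Type*) [MetricSpace X] [CompactSpace X] [ConnectedSpace X]
    (hX : Chainable X) : ∀ T : Set X, ¬ IsTriod T := by
  rintro T ⟨⟨hTcomp, hTconn⟩, Z, ⟨hZcomp, hZconn⟩, hZT, x, hxT, y, hyT, z, hzT, hxy, hxz, hyz⟩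
  have hZcl : IsClosed Z := hZcomp.isClosed
  have hTcl : IsClosed T := hTcomp.isClosed
  have hZne : Z.Nonempty := hZconn.nonempty
  obtain ⟨z0, hz0⟩ := hZne
  set W : Set X := T \ Z with hWdef
  -- facts about legs
  have legT : ∀ p : X, p ∈ W → closure (connectedComponentIn W p) ⊆ T := fun p _ =>
    closure_minimal ((connectedComponentIn_subset W p).trans diff_subset) hTcl
  have legZW : ∀ p : X, p ∈ W →
      closure (connectedComponentIn W p) ⊆ connectedComponentIn W p ∪ Z := by
    intro p hp q hq
    by_cases hqZ : q ∈ Z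
    · exact Or.inr hqZ
    · exact Or.inl (mem_cc_of_closure hp hq ⟨legT p hp hq, hqZ⟩)
  have legConn : ∀ p : X, p ∈ W → IsConnected (Z ∪ closure (connectedComponentIn W p)) := by
    intro p hp
    refine IsConnected.union ?_ hZconn
      ⟨⟨p, subset_closure (mem_connectedComponentIn hp)⟩,
        isPreconnected_connectedComponentIn.closure⟩
    obtain ⟨q, hq1, hq2⟩ := bump hTcomp hTconn.isPreconnected hZcl hZT ⟨z0, hz0⟩ hp
    exact ⟨q, hq2, hq1⟩
  have legComp : ∀ p : X, p ∈ W → IsCompact (Z ∪ closure (connectedComponentIn W p)) :=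
    fun p hp => hZcomp.union (hTcomp.of_isClosed_subset isClosed_closure (legT p hp))
  set A : Set X := Z ∪ closure (connectedComponentIn W x) with hAdef
  set B : Set X := Z ∪ closure (connectedComponentIn W y) with hBdef
  set Cc : Set X := Z ∪ closure (connectedComponentIn W z) with hCdef
  have hmemleg : ∀ p q : X, p ∈ W → q ∈ W →
      connectedComponentIn W p ≠ connectedComponentIn W q →
      p ∉ Z ∪ closure (connectedComponentIn W q) := by
    rintro p q hp hq hne (h | h)
    · exact hp.2 h
    · rcases legZW q hq h with h2 | h2
      · exact hne (connectedComponentIn_eq h2).symm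
      · exact hp.2 h2
  have hxBC : x ∉ B ∪ Cc := fun h =>
    h.elim (hmemleg x y hxT hyT hxy) (hmemleg x z hxT hzT hxz)
  have hyAC : y ∉ A ∪ Cc := fun h =>
    h.elim (hmemleg y x hyT hxT (Ne.symm hxy)) (hmemleg y z hyT hzT hyz)
  have hzAB : z ∉ A ∪ B := fun h =>
    h.elim (hmemleg z x hzT hxT (Ne.symm hxz)) (hmemleg z y hzT hyT (Ne.symm hyz))
  have hAcl : IsClosed A := (legComp x hxT).isClosed
  have hBcl : IsClosed B := (legComp y hyT).isClosed
  have hCcl : IsClosed Cc := (legComp z hzT).isClosed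
  have hεx : 0 < infDist x (B ∪ Cc) :=
    ((hBcl.union hCcl).notMem_iff_infDist_pos ⟨z0, Or.inl (Or.inl hz0)⟩).mp hxBC
  have hεy : 0 < infDist y (A ∪ Cc) :=
    ((hAcl.union hCcl).notMem_iff_infDist_pos ⟨z0, Or.inl (Or.inl hz0)⟩).mp hyAC
  have hεz : 0 < infDist z (A ∪ B) :=
    ((hAcl.union hBcl).notMem_iff_infDist_pos ⟨z0, Or.inl (Or.inl hz0)⟩).mp hzAB
  set ε : ℝ := min (infDist x (B ∪ Cc)) (min (infDist y (A ∪ Cc)) (infDist z (A ∪ B)))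
    with hεdef
  have hε : 0 < ε := lt_min hεx (lt_min hεy hεz)
  obtain ⟨n, Ch, hopen, hcover, hdiam, hlink⟩ := hX ε hε
  have hbd : ∀ i, Bornology.IsBounded (Ch i) := fun i =>
    isCompact_univ.isBounded.subset (subset_univ _)
  have intA : ∀ a b c : Fin (n + 1), a < b → b < c →
      (Ch a ∩ A).Nonempty → (Ch c ∩ A).Nonempty → (Ch b ∩ A).Nonempty :=
    fun a b c h1 h2 ha hc =>
      trace_interval hopen hcover hlink (legConn x hxT).isPreconnected h1 h2 ha hc
  have intB : ∀ a b c : Fin (n + 1), a < b → b < c →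
      (Ch a ∩ B).Nonempty → (Ch c ∩ B).Nonempty → (Ch b ∩ B).Nonempty :=
    fun a b c h1 h2 ha hc =>
      trace_interval hopen hcover hlink (legConn y hyT).isPreconnected h1 h2 ha hc
  have intC : ∀ a b c : Fin (n + 1), a < b → b < c →
      (Ch a ∩ Cc).Nonempty → (Ch c ∩ Cc).Nonempty → (Ch b ∩ Cc).Nonempty :=
    fun a b c h1 h2 ha hc =>
      trace_interval hopen hcover hlink (legConn z hzT).isPreconnected h1 h2 ha hc
  have hmemCh : ∀ p : X, ∃ i, p ∈ Ch i := fun p => mem_iUnion.mp (hcover ▸ mem_univ p)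
  obtain ⟨iz, hiz⟩ := hmemCh z0
  obtain ⟨ia, hia⟩ := hmemCh x
  obtain ⟨ib, hib⟩ := hmemCh y
  obtain ⟨ic, hic⟩ := hmemCh z
  have PAiz : (Ch iz ∩ A).Nonempty := ⟨z0, hiz, Or.inl hz0⟩
  have PBiz : (Ch iz ∩ B).Nonempty := ⟨z0, hiz, Or.inl hz0⟩
  have PCiz : (Ch iz ∩ Cc).Nonempty := ⟨z0, hiz, Or.inl hz0⟩
  have PAia : (Ch ia ∩ A).Nonempty :=
    ⟨x, hia, Or.inr (subset_closure (mem_connectedComponentIn hxT))⟩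
  have PBib : (Ch ib ∩ B).Nonempty :=
    ⟨y, hib, Or.inr (subset_closure (mem_connectedComponentIn hyT))⟩
  have PCic : (Ch ic ∩ Cc).Nonempty :=
    ⟨z, hic, Or.inr (subset_closure (mem_connectedComponentIn hzT))⟩
  have hfar : ∀ (p : X) (i : Fin (n + 1)) (S' : Set X), p ∈ Ch i →
      ε ≤ infDist p S' → ¬ (Ch i ∩ S').Nonempty := by
    rintro p i S' hpCh hdist ⟨q, hqCh, hqS⟩
    have h1 : dist p q ≤ diam (Ch i) := dist_le_diam_of_mem (hbd i) hpCh hqCh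
    have h2 : infDist p S' ≤ dist p q := infDist_le_dist_of_mem hqS
    have h3 := hdiam i
    linarith
  have hfarx := hfar x ia (B ∪ Cc) hia (min_le_left _ _)
  have hfary := hfar y ib (A ∪ Cc) hib ((min_le_right _ _).trans (min_le_left _ _))
  have hfarz := hfar z ic (A ∪ B) hic ((min_le_right _ _).trans (min_le_right _ _))
  have nBa : ¬ (Ch ia ∩ B).Nonempty := fun ⟨q, h1, h2⟩ => hfarx ⟨q, h1, Or.inl h2⟩
  have nCa : ¬ (Ch ia ∩ Cc).Nonempty := fun ⟨q, h1, h2⟩ => hfarx ⟨q, h1, Or.inr h2⟩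
  have nAb : ¬ (Ch ib ∩ A).Nonempty := fun ⟨q, h1, h2⟩ => hfary ⟨q, h1, Or.inl h2⟩
  have nCb : ¬ (Ch ib ∩ Cc).Nonempty := fun ⟨q, h1, h2⟩ => hfary ⟨q, h1, Or.inr h2⟩
  have nAc : ¬ (Ch ic ∩ A).Nonempty := fun ⟨q, h1, h2⟩ => hfarz ⟨q, h1, Or.inl h2⟩
  have nBc : ¬ (Ch ic ∩ B).Nonempty := fun ⟨q, h1, h2⟩ => hfarz ⟨q, h1, Or.inr h2⟩
  have hnea : ia ≠ iz := fun h => nBa (h ▸ PBiz)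
  have hneb : ib ≠ iz := fun h => nAb (h ▸ PAiz)
  have hnec : ic ≠ iz := fun h => nAc (h ▸ PAiz)
  rcases hnea.lt_or_gt with ha | ha
  · rcases hneb.lt_or_gt with hb | hb
    · exact side_left intA intB PAiz PBiz PAia nBa PBib nAb ha hb
    · rcases hnec.lt_or_gt with hc | hc
      · exact side_left intA intC PAiz PCiz PAia nCa PCic nAc ha hc
      · exact side_right intB intC PBiz PCiz PBib nCb PCic nBc hb hc
  · rcases hneb.lt_or_gt with hb | hb
    · rcases hnec.lt_or_gt with hc | hc
      · exact side_left intB intC PBiz PCiz PBib nCb PCic nBc hb hc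
      · exact side_right intA intC PAiz PCiz PAia nCa PCic nAc ha hc
    · exact side_right intA intB PAiz PBiz PAia nBa PBib nAb ha hb
end

section
/- Every chainable metric continuum is unicoherent. -/
open Metric Set Function

lemma my_le_infDist {X : Type*} [MetricSpace X] {s : Set X} {x : X} (hs : s.Nonempty) {r : ℝ}
    (h : ∀ y ∈ s, r ≤ dist x y) : r ≤ infDist x s := by
  by_contra hlt
  obtain ⟨y, hy, hd⟩ := (infDist_lt_iff hs).1 (lt_of_not_ge hlt)
  exact absurd (h y hy) (not_le.2 hd)

lemma pos_sep {X : Type*} [MetricSpace X] {H K : Set X} (hH : IsCompact H) (hK : IsClosed K)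
    (hne : H.Nonempty) (hdisj : H ∩ K = ∅) :
    ∃ δ : ℝ, 0 < δ ∧ ∀ h ∈ H, ∀ k ∈ K, δ ≤ dist h k := by
  rcases K.eq_empty_or_nonempty with rfl | hKne
  · exact ⟨1, one_pos, fun h _ k hk => absurd hk (notMem_empty k)⟩
  obtain ⟨x₀, hx₀, hmin⟩ := hH.exists_isMinOn hne (continuous_infDist_pt K).continuousOn
  refine ⟨infDist x₀ K, ?_, fun h hh k hk => ?_⟩
  · rcases (infDist_nonneg (s := K) (x := x₀)).lt_or_eq with h | h
    · exact h
    · exfalso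
      have : x₀ ∈ closure K := (mem_closure_iff_infDist_zero hKne).2 h.symm
      rw [hK.closure_eq] at this
      exact absurd (mem_inter hx₀ this) (by rw [hdisj]; exact notMem_empty x₀)
  · exact le_trans (hmin hh) (infDist_le_dist_of_mem hk)

lemma chain_interval {X : Type*} [TopologicalSpace X] {S : Set X} (hS : IsPreconnected S)
    {n : ℕ} (D : ℕ → Set X) (hopen : ∀ l, IsOpen (D l))
    (hcov : ∀ x : X, ∃ m, m ≤ n ∧ x ∈ D m)
    (hdisj : ∀ p q, q ≤ n → p + 2 ≤ q → D p ∩ D q = ∅)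
    {i j l : ℕ} (hil : i ≤ l) (hlj : l ≤ j) (hjn : j ≤ n)
    (hi : (D i ∩ S).Nonempty) (hj : (D j ∩ S).Nonempty) :
    (D l ∩ S).Nonempty := by
  by_contra hl
  rw [not_nonempty_iff_eq_empty] at hl
  set U : Set X := ⋃ m, ⋃ (_ : m < l), D m with hU
  set V : Set X := ⋃ m, ⋃ (_ : l < m ∧ m ≤ n), D m with hV
  have hUo : IsOpen U := isOpen_iUnion fun m => isOpen_iUnion fun _ => hopen m
  have hVo : IsOpen V := isOpen_iUnion fun m => isOpen_iUnion fun _ => hopen m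
  have hcover : S ⊆ U ∪ V := by
    intro x hx
    obtain ⟨m, hmn, hm⟩ := hcov x
    rcases lt_trichotomy m l with h | h | h
    · exact Or.inl (mem_iUnion.2 ⟨m, mem_iUnion.2 ⟨h, hm⟩⟩)
    · exact absurd (mem_inter (h ▸ hm) hx) (by rw [hl]; exact notMem_empty x)
    · exact Or.inr (mem_iUnion.2 ⟨m, mem_iUnion.2 ⟨⟨h, hmn⟩, hm⟩⟩)
  have hiU : (S ∩ U).Nonempty := by
    obtain ⟨x, hxD, hxS⟩ := hi
    have hil' : i < l := lt_of_le_of_ne hil (by rintro rfl; exact absurd (mem_inter hxD hxS) (by rw [hl]; exact notMem_empty x))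
    exact ⟨x, hxS, mem_iUnion.2 ⟨i, mem_iUnion.2 ⟨hil', hxD⟩⟩⟩
  have hjV : (S ∩ V).Nonempty := by
    obtain ⟨x, hxD, hxS⟩ := hj
    have hlj' : l < j := lt_of_le_of_ne hlj (by rintro rfl; exact absurd (mem_inter hxD hxS) (by rw [hl]; exact notMem_empty x))
    exact ⟨x, hxS, mem_iUnion.2 ⟨j, mem_iUnion.2 ⟨⟨hlj', hjn⟩, hxD⟩⟩⟩
  obtain ⟨x, hxS, hxU, hxV⟩ := hS U V hUo hVo hcover hiU hjV
  obtain ⟨p, hp⟩ := mem_iUnion.1 hxU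
  obtain ⟨hpl, hxp⟩ := mem_iUnion.1 hp
  obtain ⟨q, hq⟩ := mem_iUnion.1 hxV
  obtain ⟨⟨hlq, hqn⟩, hxq⟩ := mem_iUnion.1 hq
  have : D p ∩ D q = ∅ := hdisj p q hqn (by omega)
  exact absurd (mem_inter hxp hxq) (by rw [this]; exact notMem_empty x)

lemma exists_cross (f : ℕ → ℝ) {δ : ℝ} {a b : ℕ} (hab : a ≤ b) (ha : f a < δ) (hb : δ ≤ f b) :
    ∃ l, a < l ∧ l ≤ b ∧ f (l - 1) < δ ∧ δ ≤ f l := by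
  classical
  have hsne : {m | a < m ∧ m ≤ b ∧ δ ≤ f m}.Nonempty := by
    refine ⟨b, lt_of_le_of_ne hab ?_, le_rfl, hb⟩
    rintro rfl; exact absurd hb (not_le.2 ha)
  set l := sInf {m | a < m ∧ m ≤ b ∧ δ ≤ f m} with hldef
  obtain ⟨hal, hlb, hfl⟩ := Nat.sInf_mem hsne
  refine ⟨l, hal, hlb, ?_, hfl⟩
  rcases Nat.lt_or_ge a (l - 1) with h | h
  · have : l - 1 ∉ {m | a < m ∧ m ≤ b ∧ δ ≤ f m} := Nat.notMem_of_lt_sInf (by omega)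
    by_contra hc
    exact this ⟨h, by omega, not_lt.1 hc⟩
  · have : l - 1 = a := by omega
    rw [this]; exact ha

lemma cross_main {X : Type*} [MetricSpace X] {A B H K : Set X} {δ ε : ℝ}
    (hA : IsPreconnected A) (hB : IsPreconnected B)
    (hH : H ⊆ A ∩ B) (hK : K ⊆ A ∩ B) (hHne : H.Nonempty)
    (hsep : ∀ x ∈ H, ∀ y ∈ K, 3 * δ ≤ dist x y)
    (hδ : 0 < δ) (hεδ : ε ≤ δ / 2)
    {n : ℕ} {D : ℕ → Set X}
    (hDopen : ∀ l, IsOpen (D l))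
    (hDcov : ∀ x : X, ∃ m, m ≤ n ∧ x ∈ D m)
    (hDdiam : ∀ l, ∀ x ∈ D l, ∀ y ∈ D l, dist x y < ε)
    (hDadj : ∀ l, l + 1 ≤ n → (D l ∩ D (l + 1)).Nonempty)
    (hDdisj : ∀ p q, q ≤ n → p + 2 ≤ q → D p ∩ D q = ∅)
    {h k : X} (hh : h ∈ H) (hk : k ∈ K)
    {p q : ℕ} (hpq : p < q) (hqn : q ≤ n) (hhp : h ∈ D p) (hkq : k ∈ D q) :
    ∃ a b : X, a ∈ A ∧ b ∈ B ∧ dist a b < ε ∧ δ ≤ infDist a H ∧ δ ≤ infDist a K := by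
  classical
  have hhA : h ∈ A := (hH hh).1
  have hhB : h ∈ B := (hH hh).2
  have hkA : k ∈ A := (hK hk).1
  have hkB : k ∈ B := (hK hk).2
  have hAl : ∀ l, p ≤ l → l ≤ q → (D l ∩ A).Nonempty := fun l h1 h2 =>
    chain_interval hA D hDopen hDcov hDdisj h1 h2 hqn ⟨h, hhp, hhA⟩ ⟨k, hkq, hkA⟩
  have hBl : ∀ l, p ≤ l → l ≤ q → (D l ∩ B).Nonempty := fun l h1 h2 =>
    chain_interval hB D hDopen hDcov hDdisj h1 h2 hqn ⟨h, hhp, hhB⟩ ⟨k, hkq, hkB⟩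
  set aa : ℕ → X := fun l => if hc : p ≤ l ∧ l ≤ q then (hAl l hc.1 hc.2).choose else h with haa
  have haaspec : ∀ l, p ≤ l → l ≤ q → aa l ∈ D l ∧ aa l ∈ A := by
    intro l h1 h2
    have := (hAl l h1 h2).choose_spec
    simp only [haa, dif_pos (And.intro h1 h2)]
    exact this
  set g : ℕ → ℝ := fun l => infDist (aa l) H with hg
  have hgp : g p < δ := by
    have hap := haaspec p le_rfl hpq.le
    calc infDist (aa p) H ≤ dist (aa p) h := infDist_le_dist_of_mem hh
      _ < ε := hDdiam p (aa p) hap.1 h hhp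
      _ ≤ δ / 2 := hεδ
      _ < δ := by linarith
  have hgq : δ ≤ g q := by
    have haq := haaspec q hpq.le le_rfl
    refine my_le_infDist hHne fun y hy => ?_
    have h1 : 3 * δ ≤ dist y k := hsep y hy k hk
    have h2 : dist (aa q) k < ε := hDdiam q (aa q) haq.1 k hkq
    have h3 : dist y k ≤ dist y (aa q) + dist (aa q) k := dist_triangle _ _ _
    have : dist (aa q) y = dist y (aa q) := dist_comm _ _
    linarith
  obtain ⟨l, hpl, hlq, hgl1, hgl⟩ := exists_cross g hpq.le hgp hgq
  have hl1p : p ≤ l - 1 := by omega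
  have hl1q : l - 1 ≤ q := by omega
  have hal := haaspec l (by omega) hlq
  have hal1 := haaspec (l - 1) hl1p hl1q
  -- the step bound
  have hstep : dist (aa (l - 1)) (aa l) < 2 * ε := by
    obtain ⟨w, hw1, hw2⟩ := hDadj (l - 1) (by omega)
    have heq : l - 1 + 1 = l := by omega
    rw [heq] at hw2
    have d1 : dist (aa (l - 1)) w < ε := hDdiam (l - 1) _ hal1.1 w hw1
    have d2 : dist w (aa l) < ε := hDdiam l w hw2 _ hal.1
    calc dist (aa (l - 1)) (aa l) ≤ dist (aa (l - 1)) w + dist w (aa l) := dist_triangle _ _ _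
      _ < 2 * ε := by linarith
  have hglub : g l < δ + 2 * ε := by
    have : infDist (aa l) H ≤ infDist (aa (l - 1)) H + dist (aa l) (aa (l - 1)) :=
      infDist_le_infDist_add_dist
    have hd : dist (aa l) (aa (l - 1)) = dist (aa (l - 1)) (aa l) := dist_comm _ _
    simp only [hg] at hgl1 ⊢
    linarith
  have hK' : δ ≤ infDist (aa l) K := by
    refine my_le_infDist ⟨k, hk⟩ fun y hy => ?_
    obtain ⟨x', hx', hdx'⟩ := (infDist_lt_iff hHne).1 hglub
    have h1 : 3 * δ ≤ dist x' y := hsep x' hx' y hy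
    have h3 : dist x' y ≤ dist x' (aa l) + dist (aa l) y := dist_triangle _ _ _
    have : dist (aa l) x' = dist x' (aa l) := dist_comm _ _
    linarith
  obtain ⟨b, hbD, hbB⟩ := hBl l (by omega) hlq
  exact ⟨aa l, b, hal.2, hbB, hDdiam l _ hal.1 b hbD, hgl, hK'⟩

theorem stmt2 (X : Type*) [MetricSpace X] [CompactSpace X] [ConnectedSpace X]
    (hX : Chainable X) : Unicoherent X := by
  intro A B hsubA hsubB hunion
  obtain ⟨hAcp, hAconn⟩ := hsubA
  obtain ⟨hBcp, hBconn⟩ := hsubB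
  have hAcl : IsClosed A := hAcp.isClosed
  have hBcl : IsClosed B := hBcp.isClosed
  -- A ∩ B is nonempty
  have hne : (A ∩ B).Nonempty := by
    by_contra hemp
    rw [not_nonempty_iff_eq_empty] at hemp
    obtain ⟨x, -, hxA, hxB⟩ := isPreconnected_univ (u := Aᶜ) (v := Bᶜ)
      hAcl.isOpen_compl hBcl.isOpen_compl
      (fun x _ => by
        by_cases hA : x ∈ A
        · refine Or.inr fun hB => ?_
          exact absurd (mem_inter hA hB) (by rw [hemp]; exact notMem_empty x)
        · exact Or.inl hA)
      (by
        obtain ⟨b, hb⟩ := hBconn.nonempty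
        exact ⟨b, mem_univ b, fun hbA => absurd (mem_inter hbA hb)
          (by rw [hemp]; exact notMem_empty b)⟩)
      (by
        obtain ⟨a, ha⟩ := hAconn.nonempty
        exact ⟨a, mem_univ a, fun haB => absurd (mem_inter ha haB)
          (by rw [hemp]; exact notMem_empty a)⟩)
    have hx : x ∈ A ∪ B := by rw [hunion]; exact mem_univ x
    rcases hx with h | h
    · exact hxA h
    · exact hxB h
  refine ⟨hne, ?_⟩
  by_contra hnc
  rw [IsPreconnected] at hnc
  push_neg at hnc
  obtain ⟨u, v, huo, hvo, hcover, hSu, hSv, huv⟩ := hnc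
  set S := A ∩ B with hSdef
  set H : Set X := S \ v with hHdef
  set K : Set X := S \ u with hKdef
  have hScl : IsClosed S := hAcl.inter hBcl
  have hHcl : IsClosed H := hScl.sdiff hvo
  have hKcl : IsClosed K := hScl.sdiff huo
  have hHsub : H ⊆ A ∩ B := diff_subset
  have hKsub : K ⊆ A ∩ B := diff_subset
  have hHcp : IsCompact H := hAcp.of_isClosed_subset hHcl (fun x hx => hx.1.1)
  have hKcp : IsCompact K := hAcp.of_isClosed_subset hKcl (fun x hx => hx.1.1)
  have hHne : H.Nonempty := by
    obtain ⟨x, hxS, hxu⟩ := hSu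
    refine ⟨x, hxS, fun hxv => ?_⟩
    exact absurd (mem_inter hxS (mem_inter hxu hxv)) (by rw [huv]; exact notMem_empty x)
  have hKne : K.Nonempty := by
    obtain ⟨x, hxS, hxv⟩ := hSv
    refine ⟨x, hxS, fun hxu => ?_⟩
    exact absurd (mem_inter hxS (mem_inter hxu hxv)) (by rw [huv]; exact notMem_empty x)
  have hHKunion : S ⊆ H ∪ K := by
    intro x hx
    by_cases hxv : x ∈ v
    · refine Or.inr ⟨hx, fun hxu => ?_⟩
      exact absurd (mem_inter hx (mem_inter hxu hxv)) (by rw [huv]; exact notMem_empty x)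
    · exact Or.inl ⟨hx, hxv⟩
  have hHKdisj : H ∩ K = ∅ := by
    rw [eq_empty_iff_forall_notMem]
    rintro x ⟨⟨hxS, hxv⟩, ⟨-, hxu⟩⟩
    rcases hcover hxS with h | h
    · exact hxu h
    · exact hxv h
  obtain ⟨δ3, hδ3, hsep3⟩ := pos_sep hHcp hKcl hHne hHKdisj
  set δ : ℝ := δ3 / 3 with hδdef
  have hδ : 0 < δ := by positivity
  have hsep : ∀ x ∈ H, ∀ y ∈ K, 3 * δ ≤ dist x y := by
    intro x hx y hy
    have := hsep3 x hx y hy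
    rw [hδdef]; linarith
  have hsep' : ∀ x ∈ K, ∀ y ∈ H, 3 * δ ≤ dist x y := by
    intro x hx y hy
    rw [dist_comm]; exact hsep y hy x hx
  set F : Set X := {x | δ / 2 ≤ infDist x H ∧ δ / 2 ≤ infDist x K} with hFdef
  have hFcl : IsClosed F := by
    have h1 : IsClosed {x : X | δ / 2 ≤ infDist x H} :=
      isClosed_le continuous_const (continuous_infDist_pt H)
    have h2 : IsClosed {x : X | δ / 2 ≤ infDist x K} :=
      isClosed_le continuous_const (continuous_infDist_pt K)
    exact h1.inter h2
  set A' : Set X := A ∩ F with hA'def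
  set B' : Set X := B ∩ F with hB'def
  have hA'cp : IsCompact A' := hAcp.inter_right hFcl
  have hB'cp : IsCompact B' := hBcp.inter_right hFcl
  -- key construction
  have key : ∀ ε : ℝ, 0 < ε → ε ≤ δ / 2 → ∃ c ∈ A', ∃ d ∈ B', dist c d < ε := by
    intro ε hε hεδ
    obtain ⟨n, C, hopen, hcov, hdiam, hlink⟩ := hX ε hε
    have hlink' : ∀ i j : Fin (n + 1), (C i ∩ C j).Nonempty ↔
        ((i : ℕ) ≤ (j : ℕ) + 1 ∧ (j : ℕ) ≤ (i : ℕ) + 1) := by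
      intro i j
      rw [hlink i j, abs_le]
      omega
    set D : ℕ → Set X := fun l => C ⟨min l n, by omega⟩ with hDdef
    have hDopen : ∀ l, IsOpen (D l) := fun l => hopen _
    have hDcov : ∀ x : X, ∃ m, m ≤ n ∧ x ∈ D m := by
      intro x
      have hx : x ∈ ⋃ i, C i := by rw [hcov]; exact mem_univ x
      obtain ⟨i, hi⟩ := mem_iUnion.1 hx
      refine ⟨(i : ℕ), by omega, ?_⟩
      have : (⟨min (i : ℕ) n, by omega⟩ : Fin (n + 1)) = i := by
        apply Fin.ext
        simp only []
        omega
      rw [hDdef]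
      simp only []
      rw [this]
      exact hi
    have hDdiam : ∀ l, ∀ x ∈ D l, ∀ y ∈ D l, dist x y < ε := by
      intro l x hx y hy
      have hb : Bornology.IsBounded (D l) := (isCompact_univ.isBounded).subset (subset_univ _)
      calc dist x y ≤ diam (D l) := dist_le_diam_of_mem hb hx hy
        _ < ε := hdiam _
    have hDadj : ∀ l, l + 1 ≤ n → (D l ∩ D (l + 1)).Nonempty := by
      intro l hl
      have := (hlink' ⟨min l n, by omega⟩ ⟨min (l + 1) n, by omega⟩).2 (by simp only []; omega)
      exact this
    have hDdisj : ∀ p q, q ≤ n → p + 2 ≤ q → D p ∩ D q = ∅ := by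
      intro p q hq hpq
      rw [← not_nonempty_iff_eq_empty]
      intro hcon
      have := (hlink' ⟨min p n, by omega⟩ ⟨min q n, by omega⟩).1 hcon
      simp only [] at this
      omega
    obtain ⟨h, hh⟩ := id hHne
    obtain ⟨k, hk⟩ := id hKne
    obtain ⟨p, hpn, hhp⟩ := hDcov h
    obtain ⟨q, hqn, hkq⟩ := hDcov k
    have hpqne : p ≠ q := by
      rintro rfl
      have := hDdiam p h hhp k hkq
      have := hsep h hh k hk
      linarith
    rcases lt_or_gt_of_ne hpqne with hlt | hgt
    · obtain ⟨a, b, haA, hbB, hab, haH, haK⟩ := cross_main hAconn.isPreconnected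
        hBconn.isPreconnected hHsub hKsub hHne hsep hδ hεδ hDopen hDcov hDdiam hDadj hDdisj
        hh hk hlt hqn hhp hkq
      have hb1 : infDist a H ≤ infDist b H + dist a b := infDist_le_infDist_add_dist
      have hb2 : infDist a K ≤ infDist b K + dist a b := infDist_le_infDist_add_dist
      exact ⟨a, ⟨haA, by linarith, by linarith⟩, b, ⟨hbB, by linarith, by linarith⟩, hab⟩
    · obtain ⟨a, b, haA, hbB, hab, haK, haH⟩ := cross_main hAconn.isPreconnected
        hBconn.isPreconnected hKsub hHsub hKne hsep' hδ hεδ hDopen hDcov hDdiam hDadj hDdisj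
        hk hh hgt hpn hkq hhp
      have hb1 : infDist a H ≤ infDist b H + dist a b := infDist_le_infDist_add_dist
      have hb2 : infDist a K ≤ infDist b K + dist a b := infDist_le_infDist_add_dist
      exact ⟨a, ⟨haA, by linarith, by linarith⟩, b, ⟨hbB, by linarith, by linarith⟩, hab⟩
  -- conclusion
  obtain ⟨c0, hc0, d0, hd0, -⟩ := key (δ / 2) (by linarith) le_rfl
  by_cases hAB' : (A' ∩ B').Nonempty
  · obtain ⟨x, ⟨hxA, hxF⟩, ⟨hxB, -⟩⟩ := hAB'
    have hxS : x ∈ H ∪ K := hHKunion (mem_inter hxA hxB)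
    rcases hxS with h | h
    · have h0 : infDist x H = 0 := infDist_zero_of_mem h
      have h1 := hxF.1
      rw [h0] at h1
      linarith
    · have h0 : infDist x K = 0 := infDist_zero_of_mem h
      have h1 := hxF.2
      rw [h0] at h1
      linarith
  · rw [not_nonempty_iff_eq_empty] at hAB'
    obtain ⟨ε₀, hε₀, hsepAB⟩ := pos_sep hA'cp hB'cp.isClosed ⟨c0, hc0⟩ hAB'
    obtain ⟨c, hc, d, hd, hcd⟩ := key (min ε₀ (δ / 2)) (by positivity) (min_le_right _ _)
    have := hsepAB c hc d hd
    have := min_le_left ε₀ (δ / 2)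
    linarith
end

section
/- Every subcontinuum of a chainable metric continuum is chainable. -/
open Metric Set Function

theorem stmt4 (X : Type*) [MetricSpace X] [CompactSpace X] [ConnectedSpace X]
    (hX : Chainable X) : ∀ H : Set X, IsSubcontinuum H → Chainable ↥H := by
  classical
  rintro H ⟨hHc, hHconn⟩ ε hε
  obtain ⟨n, C, hCopen, hCuniv, hCdiam, hCadj⟩ := hX ε hε
  -- a ℕ-indexed version of the chain
  set c : ℕ → Set X := fun k => C ⟨k % (n+1), Nat.mod_lt _ n.succ_pos⟩ with hc
  have hcval : ∀ i : Fin (n+1), c i.val = C i := by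
    intro i
    simp [hc, Nat.mod_eq_of_lt i.isLt]
  have hcopen : ∀ k, IsOpen (c k) := fun k => hCopen _
  have hcdiam : ∀ k, Metric.diam (c k) < ε := fun k => hCdiam _
  have hcval' : ∀ (k : ℕ) (h : k ≤ n), c k = C ⟨k, by omega⟩ := by
    intro k h
    have he : (⟨k % (n+1), Nat.mod_lt _ n.succ_pos⟩ : Fin (n+1)) = ⟨k, by omega⟩ :=
      Fin.ext (Nat.mod_eq_of_lt (by omega))
    simp only [hc, he]
  have hadj : ∀ k l, k ≤ n → l ≤ n →
      ((c k ∩ c l).Nonempty ↔ (k ≤ l + 1 ∧ l ≤ k + 1)) := by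
    intro k l hk hl
    rw [hcval' k hk, hcval' l hl, hCadj]
    simp only [abs_le, Fin.mk_le_mk]
    omega
  -- indices of links meeting H
  set F : Finset ℕ := (Finset.range (n+1)).filter (fun k => (c k ∩ H).Nonempty) with hF
  have hFmem : ∀ k, k ∈ F ↔ (k ≤ n ∧ (c k ∩ H).Nonempty) := by
    intro k
    simp [hF, Nat.lt_succ_iff]
  have hidx : ∀ x ∈ H, ∃ k, k ∈ F ∧ x ∈ c k := by
    intro x hx
    have : x ∈ ⋃ i, C i := by rw [hCuniv]; trivial
    obtain ⟨i, hi⟩ := Set.mem_iUnion.mp this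
    refine ⟨i.val, ?_, by rw [hcval]; exact hi⟩
    rw [hFmem]
    exact ⟨Nat.lt_succ_iff.mp i.isLt, ⟨x, by rw [hcval]; exact hi, hx⟩⟩
  obtain ⟨x0, hx0⟩ := hHconn.nonempty
  obtain ⟨k0, hk0F, _⟩ := hidx x0 hx0
  have hFne : F.Nonempty := ⟨k0, hk0F⟩
  set a := F.min' hFne with ha
  set b := F.max' hFne with hb
  have haF : a ∈ F := F.min'_mem hFne
  have hbF : b ∈ F := F.max'_mem hFne
  have han : a ≤ n := ((hFmem a).mp haF).1
  have hbn : b ≤ n := ((hFmem b).mp hbF).1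
  have hab : a ≤ b := F.min'_le b hbF
  -- key connectivity lemma: consecutive links both meet H *inside* H
  have hkey : ∀ k, a ≤ k → k < b → ((c k ∩ c (k+1)) ∩ H).Nonempty := by
    intro k hak hkb
    set u : Set X := ⋃ (i : Fin (n+1)) (_ : (i : ℕ) ≤ k), C i with hu
    set v : Set X := ⋃ (i : Fin (n+1)) (_ : k < (i : ℕ)), C i with hv
    have huo : IsOpen u := isOpen_iUnion fun i => isOpen_iUnion fun _ => hCopen i
    have hvo : IsOpen v := isOpen_iUnion fun i => isOpen_iUnion fun _ => hCopen i
    have hcov : H ⊆ u ∪ v := by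
      intro x hx
      have : x ∈ ⋃ i, C i := by rw [hCuniv]; trivial
      obtain ⟨i, hi⟩ := Set.mem_iUnion.mp this
      rcases le_or_gt (i : ℕ) k with h | h
      · exact Or.inl (Set.mem_iUnion₂.mpr ⟨i, h, hi⟩)
      · exact Or.inr (Set.mem_iUnion₂.mpr ⟨i, h, hi⟩)
    have hHu : (H ∩ u).Nonempty := by
      obtain ⟨y, hy1, hy2⟩ := ((hFmem a).mp haF).2
      exact ⟨y, hy2, Set.mem_iUnion₂.mpr ⟨⟨a, by omega⟩, hak, by rwa [← hcval]⟩⟩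
    have hHv : (H ∩ v).Nonempty := by
      obtain ⟨y, hy1, hy2⟩ := ((hFmem b).mp hbF).2
      exact ⟨y, hy2, Set.mem_iUnion₂.mpr ⟨⟨b, by omega⟩, hkb, by rwa [← hcval]⟩⟩
    obtain ⟨x, hxH, hxu, hxv⟩ := hHconn.isPreconnected u v huo hvo hcov hHu hHv
    obtain ⟨i, hik, hxi⟩ := Set.mem_iUnion₂.mp hxu
    obtain ⟨j, hjk, hxj⟩ := Set.mem_iUnion₂.mp hxv
    have hij : ((i : ℕ) ≤ (j : ℕ) + 1 ∧ (j : ℕ) ≤ (i : ℕ) + 1) := by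
      rw [← hadj i.val j.val (by omega) (by omega)]
      rw [hcval, hcval]
      exact ⟨x, hxi, hxj⟩
    have hi : (i : ℕ) = k := by omega
    have hj : (j : ℕ) = k + 1 := by omega
    refine ⟨x, ⟨?_, ?_⟩, hxH⟩
    · rw [← hi, hcval]; exact hxi
    · rw [← hj, hcval]; exact hxj
  have hmem : ∀ k, a ≤ k → k ≤ b → (c k ∩ H).Nonempty := by
    intro k hak hkb
    rcases lt_or_eq_of_le hkb with h | h
    · obtain ⟨x, ⟨hx1, _⟩, hxH⟩ := hkey k hak h
      exact ⟨x, hx1, hxH⟩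
    · rw [h]
      exact ((hFmem b).mp hbF).2
  -- build the chain on H
  set m := b - a with hm
  refine ⟨m, fun i => Subtype.val ⁻¹' c (a + i.val), ?_, ?_, ?_, ?_⟩
  · exact fun i => (hcopen _).preimage continuous_subtype_val
  · ext x
    simp only [Set.mem_iUnion, Set.mem_univ, iff_true, Set.mem_preimage]
    obtain ⟨k, hkF, hxk⟩ := hidx x.val x.property
    have hak : a ≤ k := F.min'_le k hkF
    have hkb : k ≤ b := F.le_max' k hkF
    refine ⟨⟨k - a, by omega⟩, ?_⟩
    simpa [show a + (k - a) = k by omega] using hxk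
  · intro i
    calc Metric.diam (Subtype.val ⁻¹' c (a + i.val))
        = Metric.diam (Subtype.val '' (Subtype.val ⁻¹' c (a + i.val))) :=
          (isometry_subtype_coe.diam_image _).symm
      _ ≤ Metric.diam (c (a + i.val)) :=
          Metric.diam_mono (Set.image_preimage_subset _ _)
            (isCompact_univ.isBounded.subset (Set.subset_univ _))
      _ < ε := hcdiam _
  · intro i j
    have hiZ : (i : ℤ) = (i.val : ℤ) := rfl
    have hjZ : (j : ℤ) = (j.val : ℤ) := rfl
    have him : i.val ≤ m := Nat.lt_succ_iff.mp i.isLt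
    have hjm : j.val ≤ m := Nat.lt_succ_iff.mp j.isLt
    rw [hiZ, hjZ, abs_le]
    constructor
    · rintro ⟨x, hxi, hxj⟩
      have : ((a + i.val) ≤ (a + j.val) + 1 ∧ (a + j.val) ≤ (a + i.val) + 1) := by
        rw [← hadj _ _ (by omega) (by omega)]
        exact ⟨x.val, hxi, hxj⟩
      omega
    · intro habs
      have hij : i.val = j.val ∨ j.val = i.val + 1 ∨ i.val = j.val + 1 := by omega
      rcases hij with h | h | h
      · obtain ⟨x, hx1, hx2⟩ := hmem (a + i.val) (by omega) (by omega)
        exact ⟨⟨x, hx2⟩, by simpa using hx1, by simpa [← h] using hx1⟩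
      · obtain ⟨x, ⟨hx1, hx2⟩, hxH⟩ := hkey (a + i.val) (by omega) (by omega)
        refine ⟨⟨x, hxH⟩, by simpa using hx1, ?_⟩
        simpa [show a + j.val = a + i.val + 1 by omega] using hx2
      · obtain ⟨x, ⟨hx1, hx2⟩, hxH⟩ := hkey (a + j.val) (by omega) (by omega)
        refine ⟨⟨x, hxH⟩, ?_, by simpa using hx1⟩
        simpa [show a + i.val = a + j.val + 1 by omega] using hx2
end

section
/- Every almost chainable metric continuum is unicoherent. -/
open Metric Set Function

section AuxStmt7

variable {M : Type*} [MetricSpace M]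

/-- Gap lemma: a preconnected set missing a chain link lies entirely on one side. -/
lemma stmt7_gap (Lnat : ℕ → Set M) (W : Set M) (n : ℕ)
    (hopen : ∀ t, IsOpen (Lnat t)) (hWopen : IsOpen W)
    (hcov : ∀ x : M, x ∈ W ∨ ∃ t, t ≤ n ∧ x ∈ Lnat t)
    (hfar : ∀ s t : ℕ, (Lnat s ∩ Lnat t).Nonempty → s ≤ t + 1)
    (hLW : ∀ t, t < n → Lnat t ∩ W = ∅)
    (K : Set M) (hK : IsPreconnected K) (m : ℕ) (hmn : m ≤ n)
    (hKm : K ∩ Lnat m = ∅) :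
    (K ⊆ ⋃ t, ⋃ _ : t < m, Lnat t) ∨ (K ⊆ (⋃ t, ⋃ _ : m < t, Lnat t) ∪ W) := by
  set O : Set M := ⋃ t, ⋃ _ : t < m, Lnat t with hO
  set R : Set M := (⋃ t, ⋃ _ : m < t, Lnat t) ∪ W with hR
  have hOo : IsOpen O := isOpen_iUnion fun _ => isOpen_iUnion fun _ => hopen _
  have hRo : IsOpen R := (isOpen_iUnion fun _ => isOpen_iUnion fun _ => hopen _).union hWopen
  have hcover : K ⊆ O ∪ R := by
    intro x hx
    rcases hcov x with h | ⟨t, htn, hxt⟩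
    · exact Or.inr (Or.inr h)
    · rcases lt_trichotomy t m with h | h | h
      · exact Or.inl (mem_iUnion.2 ⟨t, mem_iUnion.2 ⟨h, hxt⟩⟩)
      · exact absurd (show x ∈ K ∩ Lnat m from ⟨hx, h ▸ hxt⟩)
          (by rw [hKm]; exact notMem_empty x)
      · exact Or.inr (Or.inl (mem_iUnion.2 ⟨t, mem_iUnion.2 ⟨h, hxt⟩⟩))
  have hdisj : K ∩ (O ∩ R) = ∅ := by
    rw [Set.eq_empty_iff_forall_notMem]
    rintro x ⟨-, hxO, hxR⟩
    obtain ⟨s, hs'⟩ := mem_iUnion.mp hxO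
    obtain ⟨hs, hxs⟩ := mem_iUnion.mp hs'
    rcases hxR with hxH | hxW
    · obtain ⟨t, ht, hxt⟩ : ∃ t, m < t ∧ x ∈ Lnat t := by simpa using hxH
      have := hfar t s ⟨x, hxt, hxs⟩
      omega
    · exact Set.eq_empty_iff_forall_notMem.mp (hLW s (lt_of_lt_of_le hs hmn)) x ⟨hxs, hxW⟩
  by_contra hcon
  push_neg at hcon
  obtain ⟨h1, h2⟩ := hcon
  obtain ⟨x1, hx1K, hx1⟩ := Set.not_subset.mp h1
  obtain ⟨x2, hx2K, hx2⟩ := Set.not_subset.mp h2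
  have hKO : (K ∩ O).Nonempty := ⟨x2, hx2K, (hcover hx2K).resolve_right hx2⟩
  have hKR : (K ∩ R).Nonempty := ⟨x1, hx1K, (hcover hx1K).resolve_left hx1⟩
  obtain ⟨z, hz⟩ := hK O R hOo hRo hcover hKO hKR
  exact Set.eq_empty_iff_forall_notMem.mp hdisj z hz

/-- Scan lemma: produces a contradiction from two crossing continua. -/
lemma stmt7_scan (A B : Set M)
    (hA : IsPreconnected A) (hB : IsPreconnected B)
    (Lnat : ℕ → Set M) (W : Set M) (n : ℕ) (ε : ℝ)
    (hopen : ∀ t, IsOpen (Lnat t)) (hWopen : IsOpen W)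
    (hcov : ∀ x : M, x ∈ W ∨ ∃ t, t ≤ n ∧ x ∈ Lnat t)
    (hfar : ∀ s t : ℕ, (Lnat s ∩ Lnat t).Nonempty → s ≤ t + 1)
    (hadj : ∀ t, t + 1 ≤ n → (Lnat t ∩ Lnat (t + 1)).Nonempty)
    (hdiam : ∀ t, ∀ x ∈ Lnat t, ∀ y ∈ Lnat t, dist x y < ε)
    (hLW : ∀ t, t < n → Lnat t ∩ W = ∅)
    (U V : Set M) (p q : M) (a b : ℕ)
    (hpA : p ∈ A) (hpB : p ∈ B) (hqA : q ∈ A) (hqB : q ∈ B)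
    (hpa : p ∈ Lnat a) (hqb : q ∈ Lnat b) (hbn : b ≤ n) (hab : a + 2 ≤ b)
    (hpU : ∀ x, dist p x < ε → x ∈ U) (hqV : ∀ x, dist q x < ε → x ∈ V)
    (hUV : ∀ x ∈ U, ∀ y ∈ V, ¬ dist x y < ε)
    (hN : ∀ x ∈ A, ∀ y ∈ B, x ∉ U → x ∉ V → y ∉ U → y ∉ V → ¬ dist x y < ε) :
    False := by
  classical
  have hεpos : 0 < ε := lt_of_le_of_lt dist_nonneg (hdiam a p hpa p hpa)
  have hex : ∃ t, (a ≤ t ∧ t + 1 ≤ b) ∧ (Lnat t ∩ Lnat (t + 1) ∩ V).Nonempty := by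
    refine ⟨b - 1, ⟨by omega, by omega⟩, ?_⟩
    obtain ⟨w, hw1, hw2⟩ := hadj (b - 1) (by omega)
    have hb1 : b - 1 + 1 = b := by omega
    rw [hb1] at hw2 ⊢
    exact ⟨w, ⟨hw1, hw2⟩, hqV w (hdiam b q hqb w hw2)⟩
  obtain ⟨⟨hac', hc'b⟩, x0, hx0⟩ := Nat.find_spec hex
  set c' : ℕ := Nat.find hex with hc'def
  have hca : a < c' := by
    rcases Nat.lt_or_ge a c' with h | h
    · exact h
    · exfalso
      have heq : c' = a := le_antisymm h hac'
      rw [heq] at hx0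
      have hx0U : x0 ∈ U := hpU x0 (hdiam a p hpa x0 hx0.1.1)
      exact hUV x0 hx0U x0 hx0.2 (by simpa using hεpos)
  set c : ℕ := c' - 1 with hcdef
  have hcc : c + 1 = c' := by omega
  have hnotPred := Nat.find_min hex (show c < c' by omega)
  have hDV : Lnat c ∩ Lnat (c + 1) ∩ V = ∅ := by
    by_contra h
    exact hnotPred ⟨⟨by omega, by omega⟩, Set.nonempty_iff_ne_empty.mpr h⟩
  have hDU : Lnat c ∩ Lnat (c + 1) ∩ U = ∅ := by
    rw [Set.eq_empty_iff_forall_notMem]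
    rintro x ⟨⟨-, hx2⟩, hxU⟩
    have hd : dist x x0 < ε := hdiam c' x (hcc ▸ hx2) x0 hx0.1.1
    exact hUV x hxU x0 hx0.2 hd
  set O : Set M := ⋃ t, ⋃ _ : t ≤ c, Lnat t with hO
  set R : Set M := (⋃ t, ⋃ _ : c + 1 ≤ t, Lnat t) ∪ W with hR
  have hOo : IsOpen O := isOpen_iUnion fun _ => isOpen_iUnion fun _ => hopen _
  have hRo : IsOpen R := (isOpen_iUnion fun _ => isOpen_iUnion fun _ => hopen _).union hWopen
  have hcover : ∀ x : M, x ∈ O ∪ R := by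
    intro x
    rcases hcov x with h | ⟨t, htn, hxt⟩
    · exact Or.inr (Or.inr h)
    · rcases le_or_gt t c with h | h
      · exact Or.inl (mem_iUnion.2 ⟨t, mem_iUnion.2 ⟨h, hxt⟩⟩)
      · exact Or.inr (Or.inl (mem_iUnion.2 ⟨t, mem_iUnion.2 ⟨h, hxt⟩⟩))
  have hinter : O ∩ R ⊆ Lnat c ∩ Lnat (c + 1) := by
    rintro x ⟨hxO, hxR⟩
    obtain ⟨s, hs'⟩ := mem_iUnion.mp hxO
    obtain ⟨hs, hxs⟩ := mem_iUnion.mp hs'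
    rcases hxR with hxH | hxW
    · obtain ⟨t, ht, hxt⟩ : ∃ t, c + 1 ≤ t ∧ x ∈ Lnat t := by simpa using hxH
      have h1 := hfar t s ⟨x, hxt, hxs⟩
      have h2 := hfar s t ⟨x, hxs, hxt⟩
      have hsc : s = c := by omega
      have htc : t = c + 1 := by omega
      exact ⟨hsc ▸ hxs, htc ▸ hxt⟩
    · exfalso
      exact Set.eq_empty_iff_forall_notMem.mp (hLW s (by omega)) x ⟨hxs, hxW⟩
  have hpO : p ∈ O := mem_iUnion.2 ⟨a, mem_iUnion.2 ⟨by omega, hpa⟩⟩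
  have hqR : q ∈ R := Or.inl (mem_iUnion.2 ⟨b, mem_iUnion.2 ⟨by omega, hqb⟩⟩)
  obtain ⟨α, hαA, hαD⟩ := hA O R hOo hRo (fun x _ => hcover x) ⟨p, hpA, hpO⟩ ⟨q, hqA, hqR⟩
  obtain ⟨β, hβB, hβD⟩ := hB O R hOo hRo (fun x _ => hcover x) ⟨p, hpB, hpO⟩ ⟨q, hqB, hqR⟩
  have hαD' := hinter hαD
  have hβD' := hinter hβD
  have hαU : α ∉ U := fun h => Set.eq_empty_iff_forall_notMem.mp hDU α ⟨hαD', h⟩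
  have hαV : α ∉ V := fun h => Set.eq_empty_iff_forall_notMem.mp hDV α ⟨hαD', h⟩
  have hβU : β ∉ U := fun h => Set.eq_empty_iff_forall_notMem.mp hDU β ⟨hβD', h⟩
  have hβV : β ∉ V := fun h => Set.eq_empty_iff_forall_notMem.mp hDV β ⟨hβD', h⟩
  exact hN α hαA β hβB hαU hαV hβU hβV (hdiam c α hαD'.1 β hβD'.1)

end AuxStmt7

theorem stmt7 (M : Type*) [MetricSpace M] [CompactSpace M] [ConnectedSpace M]
    (hM : AlmostChainable M) : Unicoherent M := by
  intro A B hA hB hABu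
  by_contra hcon
  have hAcl : IsClosed A := hA.1.isClosed
  have hBcl : IsClosed B := hB.1.isClosed
  have hABne : (A ∩ B).Nonempty := by
    by_contra hne
    rw [Set.not_nonempty_iff_eq_empty] at hne
    have hAB : A = Bᶜ := by
      ext x
      constructor
      · intro hx hxB
        exact Set.eq_empty_iff_forall_notMem.mp hne x ⟨hx, hxB⟩
      · intro hx
        have hxu : x ∈ A ∪ B := by rw [hABu]; trivial
        exact hxu.resolve_right hx
    have hclopen : IsClopen A := ⟨hAcl, by rw [hAB]; exact hBcl.isOpen_compl⟩
    rcases isClopen_iff.mp hclopen with h | h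
    · exact hA.2.nonempty.ne_empty h
    · obtain ⟨x, hx⟩ := hB.2.nonempty
      exact Set.eq_empty_iff_forall_notMem.mp hne x ⟨by rw [h]; trivial, hx⟩
  by_cases hAu : A = Set.univ
  · exact hcon (by rw [hAu, Set.univ_inter]; exact hB.2)
  by_cases hBu : B = Set.univ
  · exact hcon (by rw [hBu, Set.inter_univ]; exact hA.2)
  obtain ⟨x₀, hx₀⟩ := (Set.ne_univ_iff_exists_notMem A).mp hAu
  obtain ⟨x₁, hx₁⟩ := (Set.ne_univ_iff_exists_notMem B).mp hBu
  obtain ⟨rA, hrA, hballA⟩ := Metric.isOpen_iff.mp hAcl.isOpen_compl x₀ hx₀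
  obtain ⟨rB, hrB, hballB⟩ := Metric.isOpen_iff.mp hBcl.isOpen_compl x₁ hx₁
  have hnpc : ¬ IsPreconnected (A ∩ B) := fun h => hcon ⟨hABne, h⟩
  rw [IsPreconnected] at hnpc
  push_neg at hnpc
  obtain ⟨u, v, hu, hv, huv, hnu, hnv, hne_uv⟩ := hnpc
  set P : Set M := (A ∩ B) \ v with hPdef
  set Q : Set M := (A ∩ B) \ u with hQdef
  have hPQ : P ∪ Q = A ∩ B := by
    apply Set.Subset.antisymm (Set.union_subset Set.diff_subset Set.diff_subset)
    intro x hx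
    rcases huv hx with h | h
    · exact Or.inl ⟨hx, fun hxv => Set.eq_empty_iff_forall_notMem.mp hne_uv x ⟨hx, h, hxv⟩⟩
    · exact Or.inr ⟨hx, fun hxu => Set.eq_empty_iff_forall_notMem.mp hne_uv x ⟨hx, hxu, h⟩⟩
  have hABc : IsCompact (A ∩ B) := hA.1.inter_right hBcl
  have hPc : IsCompact P := hABc.diff hv
  have hQc : IsCompact Q := hABc.diff hu
  have hPne : P.Nonempty := by
    obtain ⟨x, hx⟩ := hnu
    exact ⟨x, hx.1, fun hxv => Set.eq_empty_iff_forall_notMem.mp hne_uv x ⟨hx.1, hx.2, hxv⟩⟩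
  have hQne : Q.Nonempty := by
    obtain ⟨x, hx⟩ := hnv
    exact ⟨x, hx.1, fun hxu => Set.eq_empty_iff_forall_notMem.mp hne_uv x ⟨hx.1, hxu, hx.2⟩⟩
  have hPQdisj : Disjoint P Q := by
    rw [Set.disjoint_left]
    intro x hxP hxQ
    rcases huv hxP.1 with h | h
    · exact hxQ.2 h
    · exact hxP.2 h
  obtain ⟨θ, hθ, hθdisj⟩ := hPQdisj.exists_thickenings hPc hQc.isClosed
  have hPQdist : ∀ p ∈ P, ∀ q' ∈ Q, θ ≤ dist p q' := by
    intro p hp q' hq'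
    by_contra hlt
    push_neg at hlt
    exact Set.disjoint_left.mp hθdisj (self_subset_thickening hθ _ hp)
      (mem_thickening_iff.mpr ⟨q', hq', hlt⟩)
  set U : Set M := thickening (θ / 3) P with hUdef
  set V : Set M := thickening (θ / 3) Q with hVdef
  have hUo : IsOpen U := isOpen_thickening
  have hVo : IsOpen V := isOpen_thickening
  set NA : Set M := A ∩ (U ∪ V)ᶜ with hNAdef
  set NB : Set M := B ∩ (U ∪ V)ᶜ with hNBdef
  have hNAc : IsCompact NA := hA.1.inter_right (hUo.union hVo).isClosed_compl
  have hNBc : IsCompact NB := hB.1.inter_right (hUo.union hVo).isClosed_compl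
  have hNdisj : Disjoint NA NB := by
    rw [Set.disjoint_left]
    intro x hxA hxB
    have hxAB : x ∈ P ∪ Q := by rw [hPQ]; exact ⟨hxA.1, hxB.1⟩
    rcases hxAB with h | h
    · exact hxA.2 (Or.inl (self_subset_thickening (by positivity) P h))
    · exact hxA.2 (Or.inr (self_subset_thickening (by positivity) Q h))
  obtain ⟨δ, hδ, hδdisj⟩ := hNdisj.exists_thickenings hNAc hNBc.isClosed
  set ε : ℝ := min (min (θ / 6) δ) (min (rA / 2) (rB / 2)) with hεdef
  have hε : 0 < ε := lt_min (lt_min (by positivity) hδ) (lt_min (by positivity) (by positivity))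
  have hεθ : ε ≤ θ / 6 := le_trans (min_le_left _ _) (min_le_left _ _)
  have hεδ : ε ≤ δ := le_trans (min_le_left _ _) (min_le_right _ _)
  have hεrA : ε ≤ rA / 2 := le_trans (min_le_right _ _) (min_le_left _ _)
  have hεrB : ε ≤ rB / 2 := le_trans (min_le_right _ _) (min_le_right _ _)
  obtain ⟨G, n, L, hG, hGcov, hLG, hchain, hside, hdense⟩ := hM ε hε
  have hbnd : ∀ s : Set M, Bornology.IsBounded s :=
    fun s => isCompact_univ.isBounded.subset (Set.subset_univ _)
  set W : Set M := ⋃₀ (G \ Set.range L) with hWdef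
  have hWo : IsOpen W := isOpen_sUnion fun U' hU' => (hG U' hU'.1).1
  set Lnat : ℕ → Set M := fun t => if h : t ≤ n then L ⟨t, Nat.lt_succ_of_le h⟩ else ∅ with hLdef
  have hLmk : ∀ (t : ℕ) (h : t ≤ n), Lnat t = L ⟨t, Nat.lt_succ_of_le h⟩ := by
    intro t h
    simp only [hLdef, dif_pos h]
  have hLeq : ∀ i : Fin (n + 1), Lnat (i : ℕ) = L i := by
    intro i
    rw [hLmk _ (Nat.lt_succ_iff.mp i.isLt)]
  have hLopen : ∀ t, IsOpen (Lnat t) := by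
    intro t
    by_cases h : t ≤ n
    · rw [hLmk t h]; exact (hG _ (hLG _)).1
    · simp only [hLdef, dif_neg h]; exact isOpen_empty
  have hLdiam : ∀ t, ∀ x ∈ Lnat t, ∀ y ∈ Lnat t, dist x y < ε := by
    intro t x hx y hy
    by_cases h : t ≤ n
    · rw [hLmk t h] at hx hy
      exact lt_of_le_of_lt (Metric.dist_le_diam_of_mem (hbnd _) hx hy) (hG _ (hLG _)).2
    · simp only [hLdef, dif_neg h] at hx
      exact absurd hx (Set.notMem_empty x)
  have hLne : ∀ t, t ≤ n → (Lnat t).Nonempty := by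
    intro t ht
    obtain ⟨x, hx, -⟩ := (hchain ⟨t, Nat.lt_succ_of_le ht⟩ ⟨t, Nat.lt_succ_of_le ht⟩).mpr (by simp)
    exact ⟨x, by rw [hLmk t ht]; exact hx⟩
  have hfar : ∀ s t : ℕ, (Lnat s ∩ Lnat t).Nonempty → s ≤ t + 1 := by
    rintro s t ⟨x, hxs, hxt⟩
    by_cases hs : s ≤ n
    · by_cases ht : t ≤ n
      · rw [hLmk s hs] at hxs
        rw [hLmk t ht] at hxt
        have h := (hchain _ _).mp ⟨x, hxs, hxt⟩
        rw [abs_le] at h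
        obtain ⟨h1, h2⟩ := h
        simp only [Fin.val_mk] at h1 h2
        omega
      · rw [hLdef] at hxt
        simp only [dif_neg ht] at hxt
        exact absurd hxt (Set.notMem_empty x)
    · rw [hLdef] at hxs
      simp only [dif_neg hs] at hxs
      exact absurd hxs (Set.notMem_empty x)
  have hchainN : ∀ s t : ℕ, s ≤ n → t ≤ n → s ≤ t + 1 → t ≤ s + 1 →
      (Lnat s ∩ Lnat t).Nonempty := by
    intro s t hs ht h1 h2
    obtain ⟨x, hx1, hx2⟩ := (hchain ⟨s, Nat.lt_succ_of_le hs⟩ ⟨t, Nat.lt_succ_of_le ht⟩).mpr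
      (by rw [abs_le]; constructor <;> simp <;> omega)
    exact ⟨x, by rw [hLmk s hs]; exact hx1, by rw [hLmk t ht]; exact hx2⟩
  have hadj : ∀ t, t + 1 ≤ n → (Lnat t ∩ Lnat (t + 1)).Nonempty :=
    fun t ht => hchainN t (t + 1) (by omega) ht (by omega) (by omega)
  have hLW : ∀ t, t < n → Lnat t ∩ W = ∅ := by
    intro t ht
    rw [Set.eq_empty_iff_forall_notMem]
    rintro x ⟨hxL, hxW⟩
    obtain ⟨U', ⟨hU'G, hU'nr⟩, hxU'⟩ := hxW
    have h0 := hside ⟨t, by omega⟩ ht U' hU'G hU'nr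
    rw [hLmk t (le_of_lt ht)] at hxL
    exact Set.eq_empty_iff_forall_notMem.mp h0 x ⟨hxL, hxU'⟩
  have hcov : ∀ x : M, x ∈ W ∨ ∃ t, t ≤ n ∧ x ∈ Lnat t := by
    intro x
    have hxu : x ∈ ⋃₀ G := by rw [hGcov]; trivial
    obtain ⟨U', hU'G, hxU'⟩ := hxu
    by_cases hr : U' ∈ Set.range L
    · obtain ⟨i, rfl⟩ := hr
      exact Or.inr ⟨(i : ℕ), Nat.lt_succ_iff.mp i.isLt, by rw [hLeq i]; exact hxU'⟩
    · exact Or.inl ⟨U', ⟨hU'G, hr⟩, hxU'⟩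
  by_cases hallA : ∀ i, (L i ∩ A).Nonempty
  · obtain ⟨i, y, hyL, hyd⟩ := hdense x₀
    obtain ⟨z, hzL, hzA⟩ := hallA i
    have hyz : dist y z < ε :=
      lt_of_le_of_lt (Metric.dist_le_diam_of_mem (hbnd _) hyL hzL) (hG _ (hLG _)).2
    have hdz : dist z x₀ < rA := by
      rw [dist_comm]
      calc dist x₀ z ≤ dist x₀ y + dist y z := dist_triangle _ _ _
        _ < ε + ε := by linarith
        _ ≤ rA := by linarith
    exact hballA (Metric.mem_ball.mpr hdz) hzA
  by_cases hallB : ∀ i, (L i ∩ B).Nonempty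
  · obtain ⟨i, y, hyL, hyd⟩ := hdense x₁
    obtain ⟨z, hzL, hzB⟩ := hallB i
    have hyz : dist y z < ε :=
      lt_of_le_of_lt (Metric.dist_le_diam_of_mem (hbnd _) hyL hzL) (hG _ (hLG _)).2
    have hdz : dist z x₁ < rB := by
      rw [dist_comm]
      calc dist x₁ z ≤ dist x₁ y + dist y z := dist_triangle _ _ _
        _ < ε + ε := by linarith
        _ ≤ rB := by linarith
    exact hballB (Metric.mem_ball.mpr hdz) hzB
  push_neg at hallA hallB
  obtain ⟨j₀, hj₀⟩ := hallA
  obtain ⟨i₀, hi₀⟩ := hallB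
  have hj₀' : Lnat (j₀ : ℕ) ∩ A = ∅ := by rw [hLeq]; exact hj₀
  have hi₀' : Lnat (i₀ : ℕ) ∩ B = ∅ := by rw [hLeq]; exact hi₀
  have hj₀n : (j₀ : ℕ) ≤ n := Nat.lt_succ_iff.mp j₀.isLt
  have hi₀n : (i₀ : ℕ) ≤ n := Nat.lt_succ_iff.mp i₀.isLt
  have hne_ij : (i₀ : ℕ) ≠ (j₀ : ℕ) := by
    intro h
    obtain ⟨x, hx⟩ := hLne _ hi₀n
    have hxu : x ∈ A ∪ B := by rw [hABu]; trivial
    rcases hxu with h1 | h1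
    · exact Set.eq_empty_iff_forall_notMem.mp hj₀' x ⟨h ▸ hx, h1⟩
    · exact Set.eq_empty_iff_forall_notMem.mp hi₀' x ⟨hx, h1⟩
  have noW : ∀ (X Y : Set M) (iX jY : ℕ), iX ≤ n → jY ≤ n → iX < jY → IsPreconnected Y →
      X ∪ Y = Set.univ → Lnat iX ∩ X = ∅ → Lnat jY ∩ Y = ∅ → Y ∩ W = ∅ := by
    intro X Y iX jY hiXn hjYn hij hYpre hXYu hX0 hY0
    have hYj : Y ∩ Lnat jY = ∅ := by rw [Set.inter_comm]; exact hY0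
    rcases stmt7_gap Lnat W n hLopen hWo hcov hfar hLW Y hYpre jY hjYn hYj with h | h
    · rw [Set.eq_empty_iff_forall_notMem]
      rintro x ⟨hxY, hxW⟩
      obtain ⟨s, hs'⟩ := mem_iUnion.mp (h hxY)
      obtain ⟨hs, hxs⟩ := mem_iUnion.mp hs'
      exact Set.eq_empty_iff_forall_notMem.mp (hLW s (lt_of_lt_of_le hs hjYn)) x ⟨hxs, hxW⟩
    · exfalso
      obtain ⟨x, hx⟩ := hLne iX hiXn
      have hxu : x ∈ X ∪ Y := by rw [hXYu]; trivial
      rcases hxu with h1 | h1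
      · exact Set.eq_empty_iff_forall_notMem.mp hX0 x ⟨hx, h1⟩
      · rcases h h1 with h2 | h2
        · obtain ⟨t, ht'⟩ := mem_iUnion.mp h2
          obtain ⟨ht, hxt⟩ := mem_iUnion.mp ht'
          have := hfar t iX ⟨x, hxt, hx⟩
          omega
        · exact Set.eq_empty_iff_forall_notMem.mp (hLW iX (lt_of_lt_of_le hij hjYn)) x ⟨hx, h2⟩
  have hABW : (A ∩ B) ∩ W = ∅ := by
    rcases lt_or_gt_of_ne hne_ij with h | h
    · have hAW := noW B A (i₀ : ℕ) (j₀ : ℕ) hi₀n hj₀n h hA.2.2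
        (by rw [Set.union_comm]; exact hABu) hi₀' hj₀'
      rw [Set.eq_empty_iff_forall_notMem]
      rintro x ⟨⟨hxA, -⟩, hxW⟩
      exact Set.eq_empty_iff_forall_notMem.mp hAW x ⟨hxA, hxW⟩
    · have hBW := noW A B (j₀ : ℕ) (i₀ : ℕ) hj₀n hi₀n h hB.2.2 hABu hj₀' hi₀'
      rw [Set.eq_empty_iff_forall_notMem]
      rintro x ⟨⟨-, hxB⟩, hxW⟩
      exact Set.eq_empty_iff_forall_notMem.mp hBW x ⟨hxB, hxW⟩
  have hPsub : P ⊆ A ∩ B := by rw [← hPQ]; exact Set.subset_union_left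
  have hQsub : Q ⊆ A ∩ B := by rw [← hPQ]; exact Set.subset_union_right
  obtain ⟨p, hp⟩ := hPne
  obtain ⟨q, hq⟩ := hQne
  have hlink : ∀ x ∈ A ∩ B, ∃ t, t ≤ n ∧ x ∈ Lnat t := by
    intro x hx
    rcases hcov x with h | h
    · exact absurd (show x ∈ (A ∩ B) ∩ W from ⟨hx, h⟩)
        (by rw [hABW]; exact Set.notMem_empty x)
    · exact h
  obtain ⟨a, han, hpa⟩ := hlink p (hPsub hp)
  obtain ⟨b, hbn, hqb⟩ := hlink q (hQsub hq)
  have hθpq : θ ≤ dist p q := hPQdist p hp q hq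
  by_cases hclose : a ≤ b + 1 ∧ b ≤ a + 1
  · obtain ⟨z, hz1, hz2⟩ := hchainN a b han hbn hclose.1 hclose.2
    have h1 : dist p z < ε := hLdiam a p hpa z hz1
    have h2 : dist z q < ε := hLdiam b z hz2 q hqb
    have h3 : dist p q < 2 * ε := lt_of_le_of_lt (dist_triangle p z q) (by linarith)
    linarith
  · have hor : a + 2 ≤ b ∨ b + 2 ≤ a := by omega
    have hpU : ∀ x, dist p x < ε → x ∈ U := by
      intro x hx
      exact mem_thickening_iff.mpr ⟨p, hp, by rw [dist_comm]; linarith⟩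
    have hqV : ∀ x, dist q x < ε → x ∈ V := by
      intro x hx
      exact mem_thickening_iff.mpr ⟨q, hq, by rw [dist_comm]; linarith⟩
    have hUVfar : ∀ x ∈ U, ∀ y ∈ V, ¬ dist x y < ε := by
      intro x hx y hy hlt
      obtain ⟨p', hp', hxp'⟩ := mem_thickening_iff.mp hx
      obtain ⟨q', hq', hyq'⟩ := mem_thickening_iff.mp hy
      have h1 : θ ≤ dist p' q' := hPQdist p' hp' q' hq'
      have h2 : dist p' q' ≤ dist p' x + dist x y + dist y q' := dist_triangle4 _ _ _ _
      rw [dist_comm p' x] at h2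
      linarith
    have hNfar : ∀ x ∈ A, ∀ y ∈ B, x ∉ U → x ∉ V → y ∉ U → y ∉ V → ¬ dist x y < ε := by
      intro x hxA y hyB hxU hxV hyU hyV hlt
      have hxNA : x ∈ NA := ⟨hxA, fun h => Or.elim h hxU hxV⟩
      have hyNB : y ∈ NB := ⟨hyB, fun h => Or.elim h hyU hyV⟩
      exact Set.disjoint_left.mp hδdisj (self_subset_thickening hδ _ hxNA)
        (mem_thickening_iff.mpr ⟨y, hyNB, lt_of_lt_of_le hlt hεδ⟩)
    rcases hor with h | h
    · exact stmt7_scan A B hA.2.2 hB.2.2 Lnat W n ε hLopen hWo hcov hfar hadj hLdiam hLW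
        U V p q a b (hPsub hp).1 (hPsub hp).2 (hQsub hq).1 (hQsub hq).2
        hpa hqb hbn h hpU hqV hUVfar hNfar
    · exact stmt7_scan A B hA.2.2 hB.2.2 Lnat W n ε hLopen hWo hcov hfar hadj hLdiam hLW
        V U q p b a (hQsub hq).1 (hQsub hq).2 (hPsub hp).1 (hPsub hp).2
        hqb hpa han h hqV hpU
        (fun x hx y hy hlt => hUVfar y hy x hx (by rwa [dist_comm] at hlt))
        (fun x hxA y hyB h1 h2 h3 h4 => hNfar x hxA y hyB h2 h1 h4 h3)
end

section
/- Every metric continuum with span zero is atriodic. -/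
open Metric Set Function

private lemma exists_clopen_sep {Y : Type*} [TopologicalSpace Y] [CompactSpace Y] [T2Space Y]
    (x : Y) {K : Set Y} (hK : IsClosed K) (hd : connectedComponent x ∩ K = ∅) :
    ∃ s : Set Y, IsClopen s ∧ x ∈ s ∧ s ∩ K = ∅ := by
  by_contra hcon
  push_neg at hcon
  have H1 := hK.isCompact.inter_iInter_nonempty
      (fun s : { s : Set Y // IsClopen s ∧ x ∈ s } => (s : Set Y)) (fun s => s.2.1.1)
  have H2 : ∀ u : Finset { s : Set Y // IsClopen s ∧ x ∈ s },
      (K ∩ ⋂ i ∈ u, (i : Set Y)).Nonempty := by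
    intro u
    have hclop : IsClopen (⋂ i ∈ u, (i : Set Y)) := isClopen_biInter_finset fun i _ => i.2.1
    have hxmem : x ∈ ⋂ i ∈ u, (i : Set Y) := mem_iInter₂.2 fun i _ => i.2.2
    have hne := hcon _ hclop hxmem
    rwa [inter_comm] at hne
  have H3 := H1 H2
  rw [show (⋂ i : { s : Set Y // IsClopen s ∧ x ∈ s }, (i : Set Y)) = connectedComponent x from
    (connectedComponent_eq_iInter_isClopen x).symm, inter_comm] at H3
  exact H3.ne_empty hd

private lemma bump_lemma {X : Type*} [MetricSpace X] {T Z : Set X} (hT : IsCompact T)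
    (hTconn : IsPreconnected T) (hZcl : IsClosed Z) (hZne : Z.Nonempty) (hZT : Z ⊆ T)
    {x : X} (hx : x ∈ T \ Z) :
    (closure (connectedComponentIn (T \ Z) x) ∩ Z).Nonempty := by
  by_contra hcon
  rw [not_nonempty_iff_eq_empty] at hcon
  set C := connectedComponentIn (T \ Z) x with hCdef
  have hxC : x ∈ C := mem_connectedComponentIn hx
  have hCsub : C ⊆ T \ Z := connectedComponentIn_subset _ _
  have hclT : closure C ⊆ T := by
    have h := closure_mono (hCsub.trans diff_subset)
    rwa [hT.isClosed.closure_eq] at h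
  have hclsub : closure C ⊆ T \ Z := fun p hp =>
    ⟨hclT hp, fun hpZ => (eq_empty_iff_forall_notMem.mp hcon p) ⟨hp, hpZ⟩⟩
  have hclC : closure C ⊆ C :=
    (isPreconnected_connectedComponentIn.closure).subset_connectedComponentIn
      (subset_closure hxC) hclsub
  have hCclosed : IsClosed C := isClosed_of_closure_subset hclC
  have hCZ : C ⊆ Zᶜ := fun p hp => (hCsub hp).2
  obtain ⟨V, hVopen, hCV, hclVZ⟩ :=
    normal_exists_closure_subset hCclosed hZcl.isOpen_compl hCZ
  set W := T ∩ closure V with hWdef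
  have hWcomp : IsCompact W := hT.inter_right isClosed_closure
  have hxW : x ∈ W := ⟨hx.1, subset_closure (hCV hxC)⟩
  haveI : CompactSpace W := isCompact_iff_compactSpace.mp hWcomp
  set x' : W := ⟨x, hxW⟩ with hx'def
  have himg : (Subtype.val '' connectedComponent x' : Set X) ⊆ C := by
    have h1 : IsPreconnected (Subtype.val '' connectedComponent x' : Set X) :=
      isPreconnected_connectedComponent.image _ continuous_subtype_val.continuousOn
    have h2 : (Subtype.val '' connectedComponent x' : Set X) ⊆ T \ Z := by
      rintro p ⟨q, _, rfl⟩
      exact ⟨q.2.1, fun hz => (hclVZ q.2.2) hz⟩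
    exact h1.subset_connectedComponentIn ⟨x', mem_connectedComponent, rfl⟩ h2
  have hKcl : IsClosed (Subtype.val ⁻¹' (closure V \ V) : Set W) := by
    have : IsClosed (closure V \ V) := isClosed_closure.inter hVopen.isClosed_compl
    exact this.preimage continuous_subtype_val
  have hdisj : connectedComponent x' ∩ (Subtype.val ⁻¹' (closure V \ V)) = ∅ := by
    rw [eq_empty_iff_forall_notMem]
    rintro q ⟨hq1, hq2⟩
    exact hq2.2 (hCV (himg ⟨q, hq1, rfl⟩))
  obtain ⟨s, hsclop, hxs, hsK⟩ := exists_clopen_sep x' hKcl hdisj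
  set S := (Subtype.val '' s : Set X) with hSdef
  have hSV : S ⊆ V := by
    rintro p ⟨q, hq, rfl⟩
    by_contra hpV
    exact (eq_empty_iff_forall_notMem.mp hsK q) ⟨hq, q.2.2, hpV⟩
  have hScl : IsClosed S := (hsclop.1.isCompact.image continuous_subtype_val).isClosed
  obtain ⟨O, hOopen, hOs⟩ := isOpen_induced_iff.mp hsclop.2
  have hSeq : S = (O ∩ V) ∩ T := by
    apply Subset.antisymm
    · rintro p ⟨q, hq, rfl⟩
      refine ⟨⟨?_, hSV ⟨q, hq, rfl⟩⟩, q.2.1⟩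
      have : q ∈ (Subtype.val ⁻¹' O : Set W) := hOs ▸ hq
      exact this
    · rintro p ⟨⟨hpO, hpV⟩, hpT⟩
      have hpW : p ∈ W := ⟨hpT, subset_closure hpV⟩
      exact ⟨⟨p, hpW⟩, hOs ▸ hpO, rfl⟩
  obtain ⟨z0, hz0⟩ := hZne
  have hz0S : z0 ∉ S := fun h => (hclVZ (subset_closure (hSV h))) hz0
  have hnon := hTconn (O ∩ V) Sᶜ (hOopen.inter hVopen) hScl.isOpen_compl
    (fun p hp => by
      by_cases hpS : p ∈ S
      · exact Or.inl (hSeq ▸ hpS : p ∈ (O ∩ V) ∩ T).1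
      · exact Or.inr hpS)
    ⟨x, hx.1, (hSeq ▸ (⟨x', hxs, rfl⟩ : x ∈ S) : x ∈ (O ∩ V) ∩ T).1⟩
    ⟨z0, hZT hz0, hz0S⟩
  obtain ⟨p, hpT, hpOV, hpS⟩ := hnon
  exact hpS (hSeq ▸ ⟨hpOV, hpT⟩)

private lemma leg_lemma {X : Type*} [MetricSpace X] {T Z : Set X} (hT : IsCompact T)
    (hTconn : IsPreconnected T) (hZcomp : IsCompact Z) (hZconn : IsConnected Z) (hZT : Z ⊆ T)
    {x : X} (hx : x ∈ T \ Z) :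
    ∃ A : Set X, IsCompact A ∧ IsConnected A ∧ Z ⊆ A ∧ A ⊆ T ∧ x ∈ A ∧
      ∀ y ∈ T \ Z, connectedComponentIn (T \ Z) y ≠ connectedComponentIn (T \ Z) x → y ∉ A := by
  set C := connectedComponentIn (T \ Z) x with hCdef
  have hxC : x ∈ C := mem_connectedComponentIn hx
  have hCsub : C ⊆ T \ Z := connectedComponentIn_subset _ _
  have hclT : closure C ⊆ T := by
    have h := closure_mono (hCsub.trans diff_subset)
    rwa [hT.isClosed.closure_eq] at h
  have hbump := bump_lemma hT hTconn hZcomp.isClosed hZconn.nonempty hZT hx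
  refine ⟨Z ∪ closure C, hZcomp.union (hT.of_isClosed_subset isClosed_closure hclT), ?_, ?_, ?_, ?_, ?_⟩
  · refine IsConnected.union ?_ hZconn ((isConnected_connectedComponentIn_iff.mpr hx).closure)
    obtain ⟨p, hp1, hp2⟩ := hbump
    exact ⟨p, hp2, hp1⟩
  · exact subset_union_left
  · exact union_subset hZT hclT
  · exact Or.inr (subset_closure hxC)
  · rintro y hy hne (hyZ | hycl)
    · exact hy.2 hyZ
    · have hins : insert y C ⊆ closure C := insert_subset hycl subset_closure
      have hpc : IsPreconnected (insert y C) :=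
        isPreconnected_connectedComponentIn.subset_closure (subset_insert y C) hins
      have hsub : insert y C ⊆ T \ Z := insert_subset hy hCsub
      have : insert y C ⊆ C :=
        hpc.subset_connectedComponentIn (mem_insert_iff.mpr (Or.inr hxC)) hsub
      exact hne ((connectedComponentIn_eq (this (mem_insert y C))).symm)
set_option maxHeartbeats 2000000 in
theorem stmt17 (X : Type*) [MetricSpace X] [CompactSpace X] [ConnectedSpace X]
    (hX : Span X = 0) : ∀ T : Set X, ¬ IsTriod T := by
  intro T hT
  obtain ⟨⟨hTcomp, hTconn⟩, Z, ⟨hZcomp, hZconn⟩, hZT, x, hx, y, hy, z, hz, hxy, hxz, hyz⟩ := hT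
  obtain ⟨A, hAcomp, hAconn, hZA, hAT, hxA, hAav⟩ :=
    leg_lemma hTcomp hTconn.isPreconnected hZcomp hZconn hZT hx
  obtain ⟨B, hBcomp, hBconn, hZB, hBT, hyB, hBav⟩ :=
    leg_lemma hTcomp hTconn.isPreconnected hZcomp hZconn hZT hy
  obtain ⟨C, hCcomp, hCconn, hZC, hCT, hzC, hCav⟩ :=
    leg_lemma hTcomp hTconn.isPreconnected hZcomp hZconn hZT hz
  obtain ⟨w0, hw0⟩ := hZconn.nonempty
  have hxB : x ∉ B := hBav x hx hxy
  have hxnC : x ∉ C := hCav x hx hxz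
  have hyA : y ∉ A := hAav y hy hxy.symm
  have hynC : y ∉ C := hCav y hy hyz
  have hzA : z ∉ A := hAav z hz hxz.symm
  have hzB : z ∉ B := hBav z hz hyz.symm
  -- the three "unions of two legs"
  have hBCcomp : IsCompact (B ∪ C) := hBcomp.union hCcomp
  have hACcomp : IsCompact (A ∪ C) := hAcomp.union hCcomp
  have hABcomp : IsCompact (A ∪ B) := hAcomp.union hBcomp
  have hBCne : (B ∪ C).Nonempty := ⟨w0, Or.inl (hZB hw0)⟩
  have hACne : (A ∪ C).Nonempty := ⟨w0, Or.inl (hZA hw0)⟩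
  have hABne : (A ∪ B).Nonempty := ⟨w0, Or.inl (hZA hw0)⟩
  have hBCconn : IsConnected (B ∪ C) := IsConnected.union ⟨w0, hZB hw0, hZC hw0⟩ hBconn hCconn
  have hACconn : IsConnected (A ∪ C) := IsConnected.union ⟨w0, hZA hw0, hZC hw0⟩ hAconn hCconn
  have hABconn : IsConnected (A ∪ B) := IsConnected.union ⟨w0, hZA hw0, hZB hw0⟩ hAconn hBconn
  have hxBC : x ∉ B ∪ C := fun h => h.elim hxB hxnC
  have hyAC : y ∉ A ∪ C := fun h => h.elim hyA hynC
  have hzAB : z ∉ A ∪ B := fun h => h.elim hzA hzB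
  -- distances
  set σ1 := infDist x (B ∪ C) with hσ1def
  set σ2 := infDist y (A ∪ C) with hσ2def
  set σ3 := infDist z (A ∪ B) with hσ3def
  have hσ1 : 0 < σ1 := (hBCcomp.isClosed.notMem_iff_infDist_pos hBCne).mp hxBC
  have hσ2 : 0 < σ2 := (hACcomp.isClosed.notMem_iff_infDist_pos hACne).mp hyAC
  have hσ3 : 0 < σ3 := (hABcomp.isClosed.notMem_iff_infDist_pos hABne).mp hzAB
  set σ := min σ1 (min σ2 σ3) with hσdef
  have hσ : 0 < σ := lt_min hσ1 (lt_min hσ2 hσ3)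
  -- the witness continuum in X × X
  set P1 : Set (X × X) := ({x} : Set X) ×ˢ (B ∪ C) with hP1def
  set P2 : Set (X × X) := (A ∪ B) ×ˢ ({z} : Set X) with hP2def
  set P3 : Set (X × X) := ({y} : Set X) ×ˢ (A ∪ C) with hP3def
  set P4 : Set (X × X) := (B ∪ C) ×ˢ ({x} : Set X) with hP4def
  set P5 : Set (X × X) := ({z} : Set X) ×ˢ (A ∪ B) with hP5def
  set P6 : Set (X × X) := (A ∪ C) ×ˢ ({y} : Set X) with hP6def
  set W : Set (X × X) := P1 ∪ P2 ∪ P3 ∪ P4 ∪ P5 ∪ P6 with hWdef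
  have hWcomp : IsCompact W :=
    (((((isCompact_singleton.prod hBCcomp).union (hABcomp.prod isCompact_singleton)).union
      (isCompact_singleton.prod hACcomp)).union (hBCcomp.prod isCompact_singleton)).union
      (isCompact_singleton.prod hABcomp)).union (hACcomp.prod isCompact_singleton)
  have c1 : IsConnected P1 := isConnected_singleton.prod hBCconn
  have c2 : IsConnected P2 := hABconn.prod isConnected_singleton
  have c3 : IsConnected P3 := isConnected_singleton.prod hACconn
  have c4 : IsConnected P4 := hBCconn.prod isConnected_singleton
  have c5 : IsConnected P5 := isConnected_singleton.prod hABconn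
  have c6 : IsConnected P6 := hACconn.prod isConnected_singleton
  have u12 : IsConnected (P1 ∪ P2) :=
    IsConnected.union ⟨(x, z), ⟨mem_singleton _, Or.inr hzC⟩, ⟨Or.inl hxA, mem_singleton _⟩⟩ c1 c2
  have u13 : IsConnected (P1 ∪ P2 ∪ P3) :=
    IsConnected.union ⟨(y, z), Or.inr ⟨Or.inr hyB, mem_singleton _⟩, ⟨mem_singleton _, Or.inr hzC⟩⟩ u12 c3
  have u14 : IsConnected (P1 ∪ P2 ∪ P3 ∪ P4) :=
    IsConnected.union ⟨(y, x), Or.inr ⟨mem_singleton _, Or.inl hxA⟩, ⟨Or.inl hyB, mem_singleton _⟩⟩ u13 c4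
  have u15 : IsConnected (P1 ∪ P2 ∪ P3 ∪ P4 ∪ P5) :=
    IsConnected.union ⟨(z, x), Or.inr ⟨Or.inr hzC, mem_singleton _⟩, ⟨mem_singleton _, Or.inl hxA⟩⟩ u14 c5
  have hWconn : IsConnected W :=
    IsConnected.union ⟨(z, y), Or.inr ⟨mem_singleton _, Or.inr hyB⟩, ⟨Or.inr hzC, mem_singleton _⟩⟩ u15 c6
  have hfst : Prod.fst '' W = A ∪ B ∪ C := by
    rw [hWdef, hP1def, hP2def, hP3def, hP4def, hP5def, hP6def]
    simp only [image_union]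
    rw [fst_image_prod _ hBCne, fst_image_prod _ (singleton_nonempty z),
      fst_image_prod _ hACne, fst_image_prod _ (singleton_nonempty x),
      fst_image_prod _ hABne, fst_image_prod _ (singleton_nonempty y)]
    ext p
    simp only [mem_union, mem_singleton_iff]
    constructor
    · rintro (((((rfl | h) | rfl) | h) | rfl) | h) <;> tauto
    · tauto
  have hsnd : Prod.snd '' W = A ∪ B ∪ C := by
    rw [hWdef, hP1def, hP2def, hP3def, hP4def, hP5def, hP6def]
    simp only [image_union]
    rw [snd_image_prod (singleton_nonempty x) _, snd_image_prod hABne _,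
      snd_image_prod (singleton_nonempty y) _, snd_image_prod hBCne _,
      snd_image_prod (singleton_nonempty z) _, snd_image_prod hACne _]
    ext p
    simp only [mem_union, mem_singleton_iff]
    constructor
    · rintro (((((h | rfl) | h) | rfl) | h) | rfl) <;> tauto
    · tauto
  have hdist : ∀ p ∈ W, σ ≤ dist p.1 p.2 := by
    rintro ⟨p, q⟩ hp
    rcases hp with ((((h | h) | h) | h) | h) | h
    · obtain ⟨hp1, hq⟩ := h
      rw [mem_singleton_iff] at hp1
      rw [hp1]
      exact le_trans (min_le_left _ _) (infDist_le_dist_of_mem hq)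
    · obtain ⟨hp1, hq⟩ := h
      rw [mem_singleton_iff] at hq
      rw [hq, dist_comm]
      exact le_trans (le_trans (min_le_right _ _) (min_le_right _ _))
        (infDist_le_dist_of_mem hp1)
    · obtain ⟨hp1, hq⟩ := h
      rw [mem_singleton_iff] at hp1
      rw [hp1]
      exact le_trans (le_trans (min_le_right _ _) (min_le_left _ _))
        (infDist_le_dist_of_mem hq)
    · obtain ⟨hp1, hq⟩ := h
      rw [mem_singleton_iff] at hq
      rw [hq, dist_comm]
      exact le_trans (min_le_left _ _) (infDist_le_dist_of_mem hp1)
    · obtain ⟨hp1, hq⟩ := h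
      rw [mem_singleton_iff] at hp1
      rw [hp1]
      exact le_trans (le_trans (min_le_right _ _) (min_le_right _ _))
        (infDist_le_dist_of_mem hq)
    · obtain ⟨hp1, hq⟩ := h
      rw [mem_singleton_iff] at hq
      rw [hq, dist_comm]
      exact le_trans (le_trans (min_le_right _ _) (min_le_left _ _))
        (infDist_le_dist_of_mem hp1)
  -- conclude via the span
  have hmem : σ ∈ {τ : ℝ | 0 ≤ τ ∧ ∃ Z : Set (X × X), IsSubcontinuum Z ∧
      Prod.fst '' Z = Prod.snd '' Z ∧ ∀ p ∈ Z, τ ≤ dist p.1 p.2} :=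
    ⟨hσ.le, W, ⟨hWcomp, hWconn⟩, hfst.trans hsnd.symm, hdist⟩
  have hbdd : BddAbove {τ : ℝ | 0 ≤ τ ∧ ∃ Z : Set (X × X), IsSubcontinuum Z ∧
      Prod.fst '' Z = Prod.snd '' Z ∧ ∀ p ∈ Z, τ ≤ dist p.1 p.2} := by
    refine ⟨Metric.diam (univ : Set X), ?_⟩
    rintro τ ⟨hτ0, Z', ⟨hZ'c, hZ'conn⟩, hproj', hd'⟩
    obtain ⟨p, hp⟩ := hZ'conn.nonempty
    exact (hd' p hp).trans
      (Metric.dist_le_diam_of_mem isCompact_univ.isBounded (mem_univ _) (mem_univ _))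
  have hle : σ ≤ Span X := le_csSup hbdd hmem
  rw [hX] at hle
  exact absurd hle (not_le.mpr hσ)
end

section
/- Every chainable metric continuum has span zero. -/
open Metric Set Function

/-!
Cover `X` by a chain of mesh less than `σ / 2`. If `Z ⊆ X × X` is connected and `σ ≤ d(x, y)` on
`Z`, then the two coordinates of a point of `Z` lie in links at least two apart, so which
coordinate lies further along the chain is locally constant, hence constant on `Z`: say it is
always the first. Choosing links, take `x ∈ π₁(Z)` whose link is furthest along; as `x ∈ π₂(Z)`,
some `(y, x) ∈ Z` has `y` in a link further along still, a contradiction.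
-/

theorem exists_fst_le_snd_of_image_fst_eq {α β : Type*} [LinearOrder β] [Finite β]
    (g : α → β) {Z : Set (α × α)} (hZ : Z.Nonempty)
    (hproj : Prod.fst '' Z = Prod.snd '' Z) : ∃ p ∈ Z, g p.1 ≤ g p.2 := by
  obtain ⟨_, ⟨x, hx, rfl⟩, hmax⟩ :=
    (g '' (Prod.fst '' Z)).exists_max_image id (Set.toFinite _) ((hZ.image _).image _)
  rw [hproj] at hx
  obtain ⟨p, hp, rfl⟩ := hx
  exact ⟨p, hp, hmax _ ⟨p.1, ⟨p, hp, rfl⟩, rfl⟩⟩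

section Chain

variable {X : Type*} {n : ℕ} {C : Fin (n + 1) → Set X}

def IsLinkChain (C : Fin (n + 1) → Set X) : Prop :=
  ∀ i j, (C i ∩ C j).Nonempty ↔ |(i : ℤ) - (j : ℤ)| ≤ 1

def chainAbove (C : Fin (n + 1) → Set X) : Set (X × X) :=
  {p | ∃ i j, p.1 ∈ C i ∧ p.2 ∈ C j ∧ (j : ℤ) + 2 ≤ i}

theorem chainAbove_eq_iUnion :
    chainAbove C = ⋃ (i : Fin (n + 1)) (j : Fin (n + 1)) (_ : (j : ℤ) + 2 ≤ i), C i ×ˢ C j := by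
  ext p
  simp only [chainAbove, mem_ofPred_eq, mem_iUnion, mem_prod, exists_prop]
  tauto

theorem isOpen_chainAbove [TopologicalSpace X] (hopen : ∀ i, IsOpen (C i)) :
    IsOpen (chainAbove C) := by
  rw [chainAbove_eq_iUnion]
  exact isOpen_iUnion fun i => isOpen_iUnion fun j => isOpen_iUnion fun _ =>
    (hopen i).prod (hopen j)

theorem mem_chainAbove_or_swap_mem {p : X × X} {i j : Fin (n + 1)} (hi : p.1 ∈ C i)
    (hj : p.2 ∈ C j) (hfar : 1 < |(i : ℤ) - (j : ℤ)|) :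
    p ∈ chainAbove C ∨ p.swap ∈ chainAbove C := by
  rw [lt_abs] at hfar
  rcases hfar with h | h
  · exact Or.inl ⟨i, j, hi, hj, by omega⟩
  · exact Or.inr ⟨j, i, hj, hi, by omega⟩

theorem IsLinkChain.abs_sub_le_one (hC : IsLinkChain C) {x : X} {i j : Fin (n + 1)}
    (hi : x ∈ C i) (hj : x ∈ C j) : |(i : ℤ) - (j : ℤ)| ≤ 1 :=
  (hC i j).1 ⟨x, hi, hj⟩

theorem IsLinkChain.le_of_mem_chainAbove (hC : IsLinkChain C) {p : X × X}
    (hp : p ∈ chainAbove C) {i j : Fin (n + 1)} (hi : p.1 ∈ C i) (hj : p.2 ∈ C j) : j ≤ i := by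
  obtain ⟨i₀, j₀, hi₀, hj₀, h⟩ := hp
  have hii₀ := hC.abs_sub_le_one hi hi₀
  have hjj₀ := hC.abs_sub_le_one hj hj₀
  rw [abs_le] at hii₀ hjj₀
  rw [Fin.le_def]
  omega

theorem IsLinkChain.disjoint_chainAbove_preimage_swap (hC : IsLinkChain C) :
    Disjoint (chainAbove C) (Prod.swap ⁻¹' chainAbove C) := by
  refine Set.disjoint_left.2 fun p ⟨i, j, hi, hj, hji⟩ hp' => ?_
  have hij := hC.le_of_mem_chainAbove hp' hj hi
  rw [Fin.le_def] at hij
  omega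

theorem IsLinkChain.not_forall_one_lt_abs_sub [TopologicalSpace X] (hC : IsLinkChain C)
    (hopen : ∀ i, IsOpen (C i)) (hcov : (⋃ i, C i) = univ) {Z : Set (X × X)}
    (hZ : IsConnected Z) (hproj : Prod.fst '' Z = Prod.snd '' Z) :
    ¬ ∀ p ∈ Z, ∀ i j, p.1 ∈ C i → p.2 ∈ C j → 1 < |(i : ℤ) - (j : ℤ)| := by
  intro hfar
  have hmem (x : X) : ∃ i, x ∈ C i := mem_iUnion.1 (hcov ▸ mem_univ x)
  choose ix hix using hmem
  have hsplit : Z ⊆ chainAbove C ∨ Z ⊆ Prod.swap ⁻¹' chainAbove C :=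
    hZ.isPreconnected.subset_or_subset (isOpen_chainAbove hopen)
      ((isOpen_chainAbove hopen).preimage continuous_swap)
      hC.disjoint_chainAbove_preimage_swap fun p hp =>
        mem_chainAbove_or_swap_mem (hix p.1) (hix p.2) (hfar p hp _ _ (hix p.1) (hix p.2))
  suffices ∃ p ∈ Z, ix p.1 = ix p.2 by
    obtain ⟨p, hp, heq⟩ := this
    simpa [heq] using hfar p hp _ _ (hix p.1) (hix p.2)
  rcases hsplit with hsub | hsub
  · obtain ⟨p, hp, hle⟩ := exists_fst_le_snd_of_image_fst_eq ix hZ.nonempty hproj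
    exact ⟨p, hp, hle.antisymm (hC.le_of_mem_chainAbove (hsub hp) (hix p.1) (hix p.2))⟩
  · obtain ⟨p, hp, hle⟩ :=
      exists_fst_le_snd_of_image_fst_eq (OrderDual.toDual ∘ ix) hZ.nonempty hproj
    exact ⟨p, hp, (hC.le_of_mem_chainAbove (hsub hp) (hix p.2) (hix p.1)).antisymm hle⟩

theorem IsLinkChain.one_lt_abs_sub [PseudoMetricSpace X] (hC : IsLinkChain C) {ε : ℝ}
    (hbdd : ∀ i, Bornology.IsBounded (C i)) (hdiam : ∀ i, diam (C i) < ε) {x y : X}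
    (hxy : 2 * ε ≤ dist x y) {i j : Fin (n + 1)} (hx : x ∈ C i) (hy : y ∈ C j) :
    1 < |(i : ℤ) - (j : ℤ)| := by
  by_contra! hadj
  obtain ⟨w, hwi, hwj⟩ := (hC i j).2 hadj
  have hxw := (dist_le_diam_of_mem (hbdd i) hx hwi).trans_lt (hdiam i)
  have hwy := (dist_le_diam_of_mem (hbdd j) hwj hy).trans_lt (hdiam j)
  linarith [dist_triangle x w y]

end Chain

theorem stmt18_general (X : Type*) [MetricSpace X] [CompactSpace X]
    (hX : Chainable X) : Span X = 0 := by
  refine le_antisymm (Real.sSup_nonpos fun σ hσ => ?_) (Real.sSup_nonneg fun σ hσ => hσ.1)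
  obtain ⟨-, Z, ⟨-, hZ⟩, hproj, hdist⟩ := hσ
  by_contra! hσ
  obtain ⟨n, C, hopen, hcov, hdiam, hC⟩ := hX (σ / 2) (by positivity)
  have hC : IsLinkChain C := hC
  -- `diam` of an unbounded set is `0`, so the mesh bound alone does not bound the links.
  have hbdd (i : Fin (n + 1)) : Bornology.IsBounded (C i) := isBounded_of_compactSpace
  refine hC.not_forall_one_lt_abs_sub hopen hcov hZ hproj fun p hp i j hi hj => ?_
  exact hC.one_lt_abs_sub hbdd hdiam (by linarith [hdist p hp]) hi hj

theorem stmt18 (X : Type*) [MetricSpace X] [CompactSpace X] [ConnectedSpace X]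
    (hX : Chainable X) : Span X = 0 :=
  stmt18_general X hX
end
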